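/- arXiv:1909.02892 — 10 statements merged into one kernel-verified Lean document; each statement's English description precedes it below -/
import Mathlib

section
/- (a) For every c ∈ ℝ, the function F : ℝ → ℝ defined by F(t) = 2 · Real.arctan (Real.exp (t − c)) is differentiable, satisfies F'(t) = Real.sin (F(t)) for all t ∈ ℝ, and takes all its values in the open interval (0, π). (b) Conversely, if F : ℝ → ℝ is differentiable with F'(t) = Real.sin (F(t)) for all t ∈ ℝ, and F(t₀) ∈ (0, π) for some t₀ ∈ ℝ, then F(t) = 2 · Real.arctan (Real.exp (t − c)) for all t ∈ ℝ, where c = t₀ − Real.log (Real.tan (F(t₀)/2)). -/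
open Real Set

lemma sin_two_arctan (x : ℝ) : Real.sin (2 * Real.arctan x) = 2 * x / (1 + x ^ 2) := by
  rw [Real.sin_two_mul, Real.sin_arctan, Real.cos_arctan]
  have h0 : (0:ℝ) < 1 + x ^ 2 := by positivity
  have h : Real.sqrt (1 + x ^ 2) * Real.sqrt (1 + x ^ 2) = 1 + x ^ 2 :=
    Real.mul_self_sqrt h0.le
  have hs : Real.sqrt (1 + x ^ 2) ≠ 0 := by positivity
  field_simp
  rw [Real.sq_sqrt h0.le]

lemma hasDerivAt_sol (c t : ℝ) :
    HasDerivAt (fun t : ℝ => 2 * Real.arctan (Real.exp (t - c)))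
      (Real.sin (2 * Real.arctan (Real.exp (t - c)))) t := by
  have h1 : HasDerivAt (fun t : ℝ => Real.exp (t - c)) (Real.exp (t - c)) t := by
    simpa [Function.comp_def] using (Real.hasDerivAt_exp (t - c)).comp t ((hasDerivAt_id t).sub_const c)
  have h2 := (Real.hasDerivAt_arctan (Real.exp (t - c))).comp t h1
  have h3 := h2.const_mul (2 : ℝ)
  rw [show Real.sin (2 * Real.arctan (Real.exp (t - c))) =
      2 * (1 / (1 + Real.exp (t - c) ^ 2) * Real.exp (t - c)) by
    rw [sin_two_arctan]
    ring]
  exact h3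

lemma lipschitz_sin : LipschitzWith 1 Real.sin := by
  apply lipschitzWith_of_nnnorm_deriv_le Real.differentiable_sin
  intro x
  rw [Real.deriv_sin]
  rw [← NNReal.coe_le_coe]
  simpa [Real.norm_eq_abs] using Real.abs_cos_le_one x

/-- (a) For every `c`, `F(t) = 2 arctan(e^{t-c})` is differentiable, solves
`F' = sin ∘ F`, and takes values in `(0, π)`.  (b) Conversely, any differentiable
global solution of `F' = sin ∘ F` with `F(t₀) ∈ (0,π)` for some `t₀` equals
`t ↦ 2 arctan(e^{t-c})` with `c = t₀ - log(tan(F(t₀)/2))`. -/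
theorem stmt3 :
    (∀ c : ℝ,
      Differentiable ℝ (fun t : ℝ => 2 * Real.arctan (Real.exp (t - c))) ∧
      (∀ t : ℝ, deriv (fun t : ℝ => 2 * Real.arctan (Real.exp (t - c))) t =
        Real.sin (2 * Real.arctan (Real.exp (t - c)))) ∧
      (∀ t : ℝ, 2 * Real.arctan (Real.exp (t - c)) ∈ Set.Ioo 0 Real.pi)) ∧
    (∀ F : ℝ → ℝ, Differentiable ℝ F → (∀ t : ℝ, deriv F t = Real.sin (F t)) →
      ∀ t₀ : ℝ, F t₀ ∈ Set.Ioo 0 Real.pi →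
        ∀ t : ℝ, F t =
          2 * Real.arctan (Real.exp (t - (t₀ - Real.log (Real.tan (F t₀ / 2)))))) := by
  constructor
  · intro c
    refine ⟨fun t => (hasDerivAt_sol c t).differentiableAt,
      fun t => (hasDerivAt_sol c t).deriv, fun t => ?_⟩
    constructor
    · have := Real.arctan_zero ▸ Real.arctan_strictMono (Real.exp_pos (t - c))
      linarith
    · have := Real.arctan_lt_pi_div_two (Real.exp (t - c))
      linarith
  · intro F hF hF' t₀ ht₀ t
    set c := t₀ - Real.log (Real.tan (F t₀ / 2)) with hc
    set G : ℝ → ℝ := fun t => 2 * Real.arctan (Real.exp (t - c)) with hG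
    -- initial condition
    have htan : 0 < Real.tan (F t₀ / 2) := by
      apply Real.tan_pos_of_pos_of_lt_pi_div_two
      · linarith [ht₀.1]
      · linarith [ht₀.2]
    have hG0 : G t₀ = F t₀ := by
      have he : Real.exp (t₀ - c) = Real.tan (F t₀ / 2) := by
        rw [hc]
        rw [show t₀ - (t₀ - Real.log (Real.tan (F t₀ / 2))) = Real.log (Real.tan (F t₀ / 2)) by
          ring]
        exact Real.exp_log htan
      have harc : Real.arctan (Real.tan (F t₀ / 2)) = F t₀ / 2 := by
        apply Real.arctan_tan
        · have := Real.pi_pos; linarith [ht₀.1]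
        · linarith [ht₀.2]
      simp only [hG, he, harc]
      ring
    -- uniqueness
    have key : Set.EqOn F G (Set.Icc (min t t₀ - 1) (max t t₀ + 1)) := by
      apply ODE_solution_unique_of_mem_Icc (v := fun _ x => Real.sin x)
        (s := fun _ => Set.univ) (K := 1)
        (fun _ _ => lipschitz_sin.lipschitzOnWith)
        (t₀ := t₀)
      · constructor
        · calc min t t₀ - 1 < min t t₀ := by linarith
            _ ≤ t₀ := min_le_right _ _
        · calc t₀ ≤ max t t₀ := le_max_right _ _
            _ < max t t₀ + 1 := by linarith
      · exact hF.continuous.continuousOn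
      · intro s _
        have := hF.differentiableAt.hasDerivAt (x := s)
        rwa [hF' s] at this
      · intro s _; trivial
      · exact (Continuous.continuousOn (by continuity))
      · intro s _; exact hasDerivAt_sol c s
      · intro s _; trivial
      · exact hG0.symm
    exact key ⟨by linarith [min_le_left t t₀], by linarith [le_max_left t t₀]⟩
end

section
/- Let n ≥ 1, let E = EuclideanSpace ℝ (Fin (n+2)), let N ∈ E with ‖N‖ = 1, let J ⊆ ℝ be an open interval, and let F : J → ℝ be differentiable with F'(t) = Real.sin (F(t)) and F(t) ∈ (0,π) for all t ∈ J. Define g(x,t) = (Real.sin (F t)) • x + (Real.cos (F t)) • N. Then for every t ∈ J, every x with ‖x‖ = 1 and ⟨x,N⟩ = 0, every a ∈ ℝ and every u with ⟨u,x⟩ = 0 and ⟨u,N⟩ = 0, the derivative of g at (x,t) in the direction (u,a) equals (Real.sin (F t)) • u + a · Real.sin (F t) • ((Real.cos (F t)) • x − (Real.sin (F t)) • N), and its norm equals Real.sin (F t) · Real.sqrt (‖u‖² + a²). Hence g is a conformal map from S^n × J into S^{n+1} with conformal factor sin(F(t)). -/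
open RealInnerProductSpace

/-- If `F` solves `F' = sin ∘ F` with values in `(0,π)` on an open interval `J`, then
`g(x,t) = sin(F t) • x + cos(F t) • N` has differential at `(x,t) ∈ Sⁿ × J` sending
the tangent vector `(u,a)` to `sin(F t) • u + a sin(F t) • (cos(F t) • x - sin(F t) • N)`,
of norm `sin(F t) √(‖u‖² + a²)`: `g` is conformal with factor `sin(F t)`. -/
theorem stmt7 (n : ℕ) (hn : 1 ≤ n) (N : EuclideanSpace ℝ (Fin (n + 2))) (hN : ‖N‖ = 1)
    (J : Set ℝ) (hJopen : IsOpen J) (hJconn : J.OrdConnected)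
    (F : ℝ → ℝ) (hF : ∀ t ∈ J, HasDerivAt F (Real.sin (F t)) t)
    (hFrange : ∀ t ∈ J, F t ∈ Set.Ioo 0 Real.pi)
    (g : EuclideanSpace ℝ (Fin (n + 2)) × ℝ → EuclideanSpace ℝ (Fin (n + 2)))
    (hg : ∀ p : EuclideanSpace ℝ (Fin (n + 2)) × ℝ,
      g p = Real.sin (F p.2) • p.1 + Real.cos (F p.2) • N) :
    ∀ t ∈ J, ∀ x : EuclideanSpace ℝ (Fin (n + 2)), ‖x‖ = 1 → ⟪x, N⟫ = 0 →
      ∀ (u : EuclideanSpace ℝ (Fin (n + 2))) (a : ℝ), ⟪u, x⟫ = 0 → ⟪u, N⟫ = 0 →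
        fderiv ℝ g (x, t) (u, a) =
          Real.sin (F t) • u +
            (a * Real.sin (F t)) • (Real.cos (F t) • x - Real.sin (F t) • N) ∧
        ‖fderiv ℝ g (x, t) (u, a)‖ =
          Real.sin (F t) * Real.sqrt (‖u‖ ^ 2 + a ^ 2) := by
  intro t ht x hx hxN u a hux huN
  have hgfun : g = fun p : EuclideanSpace ℝ (Fin (n + 2)) × ℝ =>
      Real.sin (F p.2) • p.1 + Real.cos (F p.2) • N := funext hg
  -- derivatives of sin ∘ F and cos ∘ F
  have hs : HasDerivAt (fun t => Real.sin (F t))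
      (Real.cos (F t) * Real.sin (F t)) t := (Real.hasDerivAt_sin (F t)).comp t (hF t ht)
  have hc : HasDerivAt (fun t => Real.cos (F t))
      (-Real.sin (F t) * Real.sin (F t)) t := (Real.hasDerivAt_cos (F t)).comp t (hF t ht)
  have hS : HasFDerivAt (fun p : EuclideanSpace ℝ (Fin (n + 2)) × ℝ => Real.sin (F p.2))
      (((1 : ℝ →L[ℝ] ℝ).smulRight (Real.cos (F t) * Real.sin (F t))).comp
        (ContinuousLinearMap.snd ℝ (EuclideanSpace ℝ (Fin (n + 2))) ℝ)) (x, t) :=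
    (hs.hasFDerivAt.comp (x, t)
      (hasFDerivAt_snd (𝕜 := ℝ) (p := ((x, t) : EuclideanSpace ℝ (Fin (n + 2)) × ℝ))) :)
  have hC : HasFDerivAt (fun p : EuclideanSpace ℝ (Fin (n + 2)) × ℝ => Real.cos (F p.2))
      (((1 : ℝ →L[ℝ] ℝ).smulRight (-Real.sin (F t) * Real.sin (F t))).comp
        (ContinuousLinearMap.snd ℝ (EuclideanSpace ℝ (Fin (n + 2))) ℝ)) (x, t) :=
    (hc.hasFDerivAt.comp (x, t)
      (hasFDerivAt_snd (𝕜 := ℝ) (p := ((x, t) : EuclideanSpace ℝ (Fin (n + 2)) × ℝ))) :)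
  have h1 : HasFDerivAt (fun p : EuclideanSpace ℝ (Fin (n + 2)) × ℝ => Real.sin (F p.2) • p.1)
      (Real.sin (F t) • ContinuousLinearMap.fst ℝ (EuclideanSpace ℝ (Fin (n + 2))) ℝ +
        ((((1 : ℝ →L[ℝ] ℝ).smulRight (Real.cos (F t) * Real.sin (F t))).comp
          (ContinuousLinearMap.snd ℝ (EuclideanSpace ℝ (Fin (n + 2))) ℝ)).smulRight x)) (x, t) :=
    hS.smul (hasFDerivAt_fst (𝕜 := ℝ) (p := ((x, t) : EuclideanSpace ℝ (Fin (n + 2)) × ℝ)))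
  have h2 : HasFDerivAt (fun p : EuclideanSpace ℝ (Fin (n + 2)) × ℝ => Real.cos (F p.2) • N)
      ((((1 : ℝ →L[ℝ] ℝ).smulRight (-Real.sin (F t) * Real.sin (F t))).comp
        (ContinuousLinearMap.snd ℝ (EuclideanSpace ℝ (Fin (n + 2))) ℝ)).smulRight N) (x, t) :=
    hC.smul_const N
  have hD : HasFDerivAt g
      ((Real.sin (F t) • ContinuousLinearMap.fst ℝ (EuclideanSpace ℝ (Fin (n + 2))) ℝ +
        ((((1 : ℝ →L[ℝ] ℝ).smulRight (Real.cos (F t) * Real.sin (F t))).comp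
          (ContinuousLinearMap.snd ℝ (EuclideanSpace ℝ (Fin (n + 2))) ℝ)).smulRight x)) +
       (((1 : ℝ →L[ℝ] ℝ).smulRight (-Real.sin (F t) * Real.sin (F t))).comp
        (ContinuousLinearMap.snd ℝ (EuclideanSpace ℝ (Fin (n + 2))) ℝ)).smulRight N) (x, t) := by
    rw [hgfun]; exact h1.add h2
  have hfd : fderiv ℝ g (x, t) (u, a) =
      Real.sin (F t) • u +
        (a * Real.sin (F t)) • (Real.cos (F t) • x - Real.sin (F t) • N) := by
    rw [hD.fderiv]
    simp only [ContinuousLinearMap.add_apply, ContinuousLinearMap.smul_apply,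
      ContinuousLinearMap.coe_fst', ContinuousLinearMap.smulRight_apply,
      ContinuousLinearMap.coe_comp', Function.comp_apply, ContinuousLinearMap.coe_snd',
      ContinuousLinearMap.one_apply, smul_eq_mul, mul_one, smul_sub, smul_smul]
    module
  refine ⟨hfd, ?_⟩
  rw [hfd]
  set D : EuclideanSpace ℝ (Fin (n + 2)) := Real.sin (F t) • u +
      (a * Real.sin (F t)) • (Real.cos (F t) • x - Real.sin (F t) • N) with hDdef
  have hxu : ⟪x, u⟫ = 0 := by rw [real_inner_comm]; exact hux
  have hNu : ⟪N, u⟫ = 0 := by rw [real_inner_comm]; exact huN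
  have hNx : ⟪N, x⟫ = 0 := by rw [real_inner_comm]; exact hxN
  have hsin_pos : 0 < Real.sin (F t) :=
    Real.sin_pos_of_pos_of_lt_pi (hFrange t ht).1 (hFrange t ht).2
  have hinner : ⟪D, D⟫ = Real.sin (F t) ^ 2 * (‖u‖ ^ 2 + a ^ 2) := by
    simp only [hDdef, inner_add_left, inner_add_right, inner_sub_left, inner_sub_right,
      inner_smul_left, inner_smul_right, real_inner_self_eq_norm_sq, hx, hN, hux, huN, hxN,
      hxu, hNu, hNx, conj_trivial]
    linear_combination (Real.sin (F t)) ^ 2 * a ^ 2 * Real.sin_sq_add_cos_sq (F t)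
  have hnorm : ‖D‖ = Real.sqrt ⟪D, D⟫ := by
    rw [real_inner_self_eq_norm_sq, Real.sqrt_sq (norm_nonneg D)]
  rw [hnorm, hinner, Real.sqrt_mul (sq_nonneg _), Real.sqrt_sq hsin_pos.le]
end

section
/- Let m ≥ 2, n ≥ 1, let U ⊆ ℝ × ℝ^{m−1} be open with points written p = (s,x), let φ : U → EuclideanSpace ℝ (Fin n) be smooth satisfying the polar-metric conditions, and let A ≠ 0. Define f : U → (EuclideanSpace ℝ (Fin n)) × ℝ by f(s,x) = (φ(s,x), A·s), and let e = (0, 1) ∈ (EuclideanSpace ℝ (Fin n)) × ℝ be the unit vector tangent to the second factor. Then for every p ∈ U, the tangential component of e at p (the orthogonal projection of e onto the range of fderiv ℝ f p) has norm |A| / Real.sqrt (1 + A²), and hence the normal component of e at p has norm 1 / Real.sqrt (1 + A²); in particular the ratio of the norms of the normal and tangential components of e is the constant 1/|A|, i.e. f has the constant ratio property with respect to the constant unit vector field e. -/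
open RealInnerProductSpace

/-- The tangential component of a vector `w` at `p` along a map `f`: the orthogonal
projection of `w` onto the range of the Fréchet derivative of `f` at `p`. -/
noncomputable def tangentialComponent {E F : Type*} [NormedAddCommGroup E]
    [NormedSpace ℝ E] [NormedAddCommGroup F] [InnerProductSpace ℝ F]
    [FiniteDimensional ℝ F] (f : E → F) (p : E) (w : F) : F :=
  (Submodule.orthogonalProjectionOnto (LinearMap.range (fderiv ℝ f p : E →ₗ[ℝ] F)) w : F)

/-- If `φ : U ⊆ ℝ × ℝ^{m-1} → ℝⁿ` is smooth and satisfies the polar-metric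
conditions, and `A ≠ 0`, then `f(s,x) = (φ(s,x), A s)` has the constant ratio
property with respect to the constant unit vector field `e = (0,1)`: the tangential
component of `e` has constant norm `|A|/√(1+A²)`, the normal component has constant
norm `1/√(1+A²)`, and their ratio is `1/|A|`. -/
theorem stmt8 (m n : ℕ) (hm : 2 ≤ m) (hn : 1 ≤ n)
    (U : Set (ℝ × EuclideanSpace ℝ (Fin (m - 1)))) (hU : IsOpen U)
    (φ : ℝ × EuclideanSpace ℝ (Fin (m - 1)) → EuclideanSpace ℝ (Fin n))
    (hφ : ContDiffOn ℝ (⊤ : ℕ∞) φ U)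
    (hpolar1 : ∀ p ∈ U, ⟪fderiv ℝ φ p (1, 0), fderiv ℝ φ p (1, 0)⟫ = 1)
    (hpolar2 : ∀ p ∈ U, ∀ i : Fin (m - 1),
      ⟪fderiv ℝ φ p (1, 0), fderiv ℝ φ p (0, EuclideanSpace.single i 1)⟫ = 0)
    (A : ℝ) (hA : A ≠ 0)
    (f : ℝ × EuclideanSpace ℝ (Fin (m - 1)) →
      WithLp 2 (EuclideanSpace ℝ (Fin n) × ℝ))
    (hf : ∀ p, f p = (WithLp.equiv 2 (EuclideanSpace ℝ (Fin n) × ℝ)).symm (φ p, A * p.1))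
    (e : WithLp 2 (EuclideanSpace ℝ (Fin n) × ℝ))
    (he : e = (WithLp.equiv 2 (EuclideanSpace ℝ (Fin n) × ℝ)).symm (0, 1)) :
    ∀ p ∈ U,
      ‖tangentialComponent f p e‖ = |A| / Real.sqrt (1 + A ^ 2) ∧
      ‖e - tangentialComponent f p e‖ = 1 / Real.sqrt (1 + A ^ 2) ∧
      ‖e - tangentialComponent f p e‖ / ‖tangentialComponent f p e‖ = 1 / |A| := by
  intro p hp
  have hφd : DifferentiableAt ℝ φ p := (hφ.contDiffAt (hU.mem_nhds hp)).differentiableAt (by simp)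
  set Ψ := (WithLp.prodContinuousLinearEquiv 2 ℝ (EuclideanSpace ℝ (Fin n)) ℝ).symm with hΨ
  set D := fderiv ℝ φ p with hD
  have hg : HasFDerivAt (fun q : ℝ × EuclideanSpace ℝ (Fin (m-1)) => (φ q, A * q.1))
      (D.prod (A • ContinuousLinearMap.fst ℝ ℝ (EuclideanSpace ℝ (Fin (m-1))))) p :=
    HasFDerivAt.prodMk hφd.hasFDerivAt (hasFDerivAt_fst.const_mul A)
  have hF : HasFDerivAt f ((Ψ : _ →L[ℝ] _).comp
      (D.prod (A • ContinuousLinearMap.fst ℝ ℝ (EuclideanSpace ℝ (Fin (m-1)))))) p := by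
    have : f = fun q => Ψ ((φ q, A * q.1)) := funext fun q => hf q
    rw [this]
    exact Ψ.hasFDerivAt.comp p hg
  have : ContinuousSMul ℝ (WithLp 2 (EuclideanSpace ℝ (Fin n) × ℝ)) := NormedSpace.toIsBoundedSMul.continuousSMul
  set L := fderiv ℝ f p with hL
  have hLapp : ∀ q : ℝ × EuclideanSpace ℝ (Fin (m-1)),
      L q = Ψ (D q, A * q.1) := by
    intro q; rw [hL, hF.fderiv]; simp [ContinuousLinearMap.prod_apply, smul_eq_mul]
  -- key inner product computations
  have hzero : ∀ x : EuclideanSpace ℝ (Fin (m-1)), ⟪D (1,0), D (0,x)⟫ = 0 := by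
    intro x
    have hx : ((0, x) : ℝ × EuclideanSpace ℝ (Fin (m-1))) =
        ∑ i, x i • ((0, EuclideanSpace.single i 1) : ℝ × EuclideanSpace ℝ (Fin (m-1))) := by
      rw [Prod.ext_iff]
      constructor
      · rw [Prod.fst_sum]; simp
      · rw [Prod.snd_sum]
        have hsum : ∑ i, x i • EuclideanSpace.single i (1:ℝ) = x := by
          simpa [EuclideanSpace.basisFun_apply, EuclideanSpace.basisFun_repr] using
            (EuclideanSpace.basisFun (Fin (m-1)) ℝ).sum_repr x
        simp only [Prod.smul_snd, Prod.smul_def]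
        simpa using hsum.symm
    rw [hx, map_sum, inner_sum]
    simp only [map_smul, inner_smul_right]
    rw [Finset.sum_eq_zero]
    intro i _
    rw [hpolar2 p hp i]
    ring
  have hkey : ∀ s : ℝ, ∀ x : EuclideanSpace ℝ (Fin (m-1)), ⟪D (1,0), D (s,x)⟫ = s := by
    intro s x
    have : ((s, x) : ℝ × EuclideanSpace ℝ (Fin (m-1))) = s • (1,0) + (0,x) := by
      simp [Prod.ext_iff]
    rw [this, map_add, map_smul, inner_add_right, real_inner_smul_right, hpolar1 p hp,
      hzero]
    ring
  have h1A : (0:ℝ) < 1 + A^2 := by positivity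
  have hsq : Real.sqrt (1 + A^2) ^ 2 = 1 + A^2 := Real.sq_sqrt h1A.le
  have hsqpos : 0 < Real.sqrt (1 + A^2) := Real.sqrt_pos.mpr h1A
  set c : ℝ := A / (1 + A^2) with hc
  set v := L (1, 0) with hv
  -- inner products with e and v
  have hev : ∀ s : ℝ, ∀ x : EuclideanSpace ℝ (Fin (m-1)),
      ⟪e, L (s, x)⟫ = A * s := by
    intro s x
    rw [he, hLapp]
    simp only [WithLp.prod_inner_apply]
    simp only [Ψ, WithLp.prodContinuousLinearEquiv_symm_apply, WithLp.toLp_fst,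
      WithLp.toLp_snd]
    simp [RCLike.inner_apply]
  have hvv : ∀ s : ℝ, ∀ x : EuclideanSpace ℝ (Fin (m-1)),
      ⟪v, L (s, x)⟫ = s * (1 + A^2) := by
    intro s x
    rw [hv, hLapp, hLapp]
    simp only [WithLp.prod_inner_apply]
    simp only [Ψ, WithLp.prodContinuousLinearEquiv_symm_apply, WithLp.toLp_fst,
      WithLp.toLp_snd]
    rw [hkey s x]
    simp [RCLike.inner_apply]
    ring
  have htan : tangentialComponent f p e = c • v := by
    unfold tangentialComponent
    rw [← Submodule.starProjection_apply]
    apply Submodule.eq_starProjection_of_mem_of_inner_eq_zero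
    · exact Submodule.smul_mem _ c (LinearMap.mem_range_self _ _)
    · rintro w ⟨⟨s, x⟩, rfl⟩
      rw [ContinuousLinearMap.coe_coe, ← hL]
      rw [inner_sub_left, real_inner_smul_left, hev s x, hvv s x, hc]
      field_simp
      ring
  have hnv : ‖v‖ = Real.sqrt (1 + A^2) := by
    rw [norm_eq_sqrt_real_inner]
    congr 1
    rw [show ⟪v, v⟫ = ⟪v, L (1, 0)⟫ from rfl, hvv]
    ring
  have hne : ‖e - tangentialComponent f p e‖ = 1 / Real.sqrt (1 + A^2) := by
    rw [htan, norm_eq_sqrt_real_inner]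
    have : ⟪e - c • v, e - c • v⟫ = 1 / (1 + A^2) := by
      have h1 : ⟪e, e⟫ = 1 := by
        rw [he]; simp [WithLp.prod_inner_apply]
      have h2 : ⟪e, v⟫ = A := by
        have := hev 1 0; rw [mul_one] at this; exact this
      have h3 : ⟪v, v⟫ = 1 + A^2 := by
        have := hvv 1 0; rw [one_mul] at this; exact this
      rw [real_inner_sub_sub_self, h1, real_inner_smul_right, h2, real_inner_smul_left,
        real_inner_smul_right, h3, hc]
      field_simp
      ring
    rw [this, one_div, one_div, Real.sqrt_inv]
  have hnt : ‖tangentialComponent f p e‖ = |A| / Real.sqrt (1 + A^2) := by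
    rw [htan, norm_smul, hnv, Real.norm_eq_abs, hc, abs_div, abs_of_pos h1A,
      div_mul_eq_mul_div, div_eq_div_iff h1A.ne' hsqpos.ne', mul_assoc,
      Real.mul_self_sqrt h1A.le]
  refine ⟨hnt, hne, ?_⟩
  rw [hne, hnt]
  have habs : |A| ≠ 0 := abs_ne_zero.mpr hA
  field_simp
end

section
/- Let m ≥ 2, n ≥ 1, let U ⊆ ℝ × ℝ^{m−1} be open with points written p = (s,x), let φ : U → EuclideanSpace ℝ (Fin n) be smooth satisfying the polar-metric conditions and with ‖φ(p)‖ = 1 for all p ∈ U, and let A ≠ 0. Define f : U → EuclideanSpace ℝ (Fin n) by f(s,x) = Real.exp (A·s) • φ(s,x). Then for every p = (s,x) ∈ U, the tangential component of the position vector f(p) at p (the orthogonal projection of f(p) onto the range of fderiv ℝ f p) has norm (|A| / Real.sqrt (1 + A²)) · ‖f(p)‖, and the normal component of f(p) at p has norm (1 / Real.sqrt (1 + A²)) · ‖f(p)‖; in particular the ratio of the norms of the normal and tangential components of the position vector is the constant 1/|A|, i.e. f has the constant ratio property with respect to the radial vector field R(y) = y. -/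
open RealInnerProductSpace

/-- If `φ : U ⊆ ℝ × ℝ^{m-1} → Sⁿ⁻¹ ⊂ ℝⁿ` is smooth, satisfies the polar-metric
conditions, and `A ≠ 0`, then `f(s,x) = e^{As} • φ(s,x)` has the constant ratio
property with respect to the radial vector field `R(y) = y`: the tangential
component of the position vector has norm `(|A|/√(1+A²))‖f(p)‖`, the normal
component has norm `(1/√(1+A²))‖f(p)‖`, and their ratio is the constant `1/|A|`. -/
theorem stmt9 (m n : ℕ) (hm : 2 ≤ m) (hn : 1 ≤ n)
    (U : Set (ℝ × EuclideanSpace ℝ (Fin (m - 1)))) (hU : IsOpen U)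
    (φ : ℝ × EuclideanSpace ℝ (Fin (m - 1)) → EuclideanSpace ℝ (Fin n))
    (hφ : ContDiffOn ℝ (⊤ : ℕ∞) φ U)
    (hsphere : ∀ p ∈ U, ‖φ p‖ = 1)
    (hpolar1 : ∀ p ∈ U, ⟪fderiv ℝ φ p (1, 0), fderiv ℝ φ p (1, 0)⟫ = 1)
    (hpolar2 : ∀ p ∈ U, ∀ i : Fin (m - 1),
      ⟪fderiv ℝ φ p (1, 0), fderiv ℝ φ p (0, EuclideanSpace.single i 1)⟫ = 0)
    (A : ℝ) (hA : A ≠ 0)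
    (f : ℝ × EuclideanSpace ℝ (Fin (m - 1)) → EuclideanSpace ℝ (Fin n))
    (hf : ∀ p, f p = Real.exp (A * p.1) • φ p) :
    ∀ p ∈ U,
      ‖tangentialComponent f p (f p)‖ = |A| / Real.sqrt (1 + A ^ 2) * ‖f p‖ ∧
      ‖f p - tangentialComponent f p (f p)‖ = 1 / Real.sqrt (1 + A ^ 2) * ‖f p‖ ∧
      ‖f p - tangentialComponent f p (f p)‖ / ‖tangentialComponent f p (f p)‖ =
        1 / |A| := by
  intro p hp
  set e : ℝ := Real.exp (A * p.1) with he_def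
  have he : 0 < e := Real.exp_pos _
  set S : ℝ := 1 + A ^ 2 with hS_def
  have hS : (0:ℝ) < S := by positivity
  have hsq : Real.sqrt S ^ 2 = S := Real.sq_sqrt hS.le
  have hsqpos : 0 < Real.sqrt S := Real.sqrt_pos.2 hS
  have hφd : DifferentiableAt ℝ φ p :=
    ((hφ.contDiffAt (hU.mem_nhds hp)).differentiableAt (by simp))
  set Dφ := fderiv ℝ φ p with hDφ_def
  -- derivative of f
  have hcoef : HasFDerivAt (fun q : ℝ × EuclideanSpace ℝ (Fin (m-1)) => Real.exp (A * q.1))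
      (e • (A • ContinuousLinearMap.fst ℝ ℝ (EuclideanSpace ℝ (Fin (m-1))))) p :=
    (hasFDerivAt_fst.const_mul A).exp
  have hF : HasFDerivAt f
      (e • Dφ + (e • (A • ContinuousLinearMap.fst ℝ ℝ
        (EuclideanSpace ℝ (Fin (m-1))))).smulRight (φ p)) p := by
    have hfe : f = fun q => Real.exp (A * q.1) • φ q := funext hf
    rw [hfe]
    exact hcoef.smul hφd.hasFDerivAt
  have hDv : ∀ v : ℝ × EuclideanSpace ℝ (Fin (m-1)),
      fderiv ℝ f p v = (e * (A * v.1)) • φ p + e • Dφ v := by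
    intro v
    rw [hF.fderiv]
    simp [ContinuousLinearMap.smulRight_apply, smul_smul]
    module
  have hself : ⟪φ p, φ p⟫ = (1:ℝ) := by
    rw [real_inner_self_eq_norm_sq, hsphere p hp]; norm_num
  -- φ p ⟂ image of Dφ
  have horth : ∀ v : ℝ × EuclideanSpace ℝ (Fin (m-1)), ⟪φ p, Dφ v⟫ = 0 := by
    intro v
    have hc : ∀ᶠ q in nhds p, ⟪φ q, φ q⟫ = (1:ℝ) := by
      filter_upwards [hU.mem_nhds hp] with q hq
      rw [real_inner_self_eq_norm_sq, hsphere q hq]; norm_num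
    have h1 : HasFDerivAt (fun q => ⟪φ q, φ q⟫)
        (0 : ℝ × EuclideanSpace ℝ (Fin (m-1)) →L[ℝ] ℝ) p :=
      (hasFDerivAt_const (1:ℝ) p).congr_of_eventuallyEq hc
    have h3 := h1.unique (hφd.hasFDerivAt.inner ℝ hφd.hasFDerivAt)
    have h4 := congrFun (congrArg DFunLike.coe h3.symm) v
    simp only [ContinuousLinearMap.comp_apply, ContinuousLinearMap.prod_apply,
      ContinuousLinearMap.zero_apply, fderivInnerCLM_apply] at h4
    rw [real_inner_comm (φ p)] at h4
    linarith
  -- Dφ(1,0) ⟂ Dφ(0,x)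
  have horthx : ∀ x : EuclideanSpace ℝ (Fin (m-1)),
      ⟪Dφ (1,0), Dφ ((0:ℝ), x)⟫ = 0 := by
    intro x
    have hx : ((0:ℝ), x) = ∑ i, x i • (((0:ℝ), EuclideanSpace.single i (1:ℝ)) :
        ℝ × EuclideanSpace ℝ (Fin (m-1))) := by
      rw [Prod.ext_iff]
      constructor
      · rw [Prod.fst_sum]; simp
      · rw [Prod.snd_sum]
        ext j
        rw [WithLp.ofLp_sum, Finset.sum_apply]
        simp [EuclideanSpace.single_apply]
    rw [hx, map_sum, inner_sum]
    refine Finset.sum_eq_zero fun i _ => ?_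
    rw [map_smul, real_inner_smul_right, hpolar2 p hp i, mul_zero]
  -- ⟪Dφ(1,0), Dφ v⟫ = v.1
  have hDφinner : ∀ v : ℝ × EuclideanSpace ℝ (Fin (m-1)), ⟪Dφ (1,0), Dφ v⟫ = v.1 := by
    intro v
    have hv : v = v.1 • (((1:ℝ), (0:EuclideanSpace ℝ (Fin (m-1)))) :
        ℝ × EuclideanSpace ℝ (Fin (m-1))) + ((0:ℝ), v.2) := by
      rw [Prod.ext_iff]
      constructor <;> simp
    rw [hv, map_add, map_smul, inner_add_right, real_inner_smul_right,
      hpolar1 p hp, horthx v.2]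
    simp
  -- main inner product identities
  have hwD : ∀ v : ℝ × EuclideanSpace ℝ (Fin (m-1)),
      ⟪f p, fderiv ℝ f p v⟫ = A * e ^ 2 * v.1 := by
    intro v
    rw [hf p, hDv v, inner_add_right, real_inner_smul_left, real_inner_smul_left,
      real_inner_smul_right, real_inner_smul_right, hself, horth v]
    ring
  have hDD : ∀ v : ℝ × EuclideanSpace ℝ (Fin (m-1)),
      ⟪fderiv ℝ f p (1, (0:EuclideanSpace ℝ (Fin (m-1)))), fderiv ℝ f p v⟫
        = e ^ 2 * S * v.1 := by
    intro v
    rw [hDv, hDv]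
    rw [inner_add_left, inner_add_right, inner_add_right,
      real_inner_smul_left, real_inner_smul_left, real_inner_smul_left, real_inner_smul_left,
      real_inner_smul_right, real_inner_smul_right, real_inner_smul_right, real_inner_smul_right,
      real_inner_comm (φ p) (Dφ (1,0)), hself, horth v, horth (1,0), hDφinner v]
    simp only [hS_def]
    ring
  -- the tangential component
  set t : EuclideanSpace ℝ (Fin n) :=
    (A / S) • fderiv ℝ f p (1, (0:EuclideanSpace ℝ (Fin (m-1)))) with ht_def
  have htmem : t ∈ LinearMap.range (fderiv ℝ f p : ℝ × EuclideanSpace ℝ (Fin (m-1)) →ₗ[ℝ] EuclideanSpace ℝ (Fin n)) :=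
    by exact Submodule.smul_mem _ _ (LinearMap.mem_range_self (fderiv ℝ f p : ℝ × EuclideanSpace ℝ (Fin (m-1)) →ₗ[ℝ] EuclideanSpace ℝ (Fin n)) (1, 0))
  have hperp : ∀ w ∈ LinearMap.range (fderiv ℝ f p : ℝ × EuclideanSpace ℝ (Fin (m-1)) →ₗ[ℝ] EuclideanSpace ℝ (Fin n)), ⟪f p - t, w⟫ = 0 := by
    rintro w hw
    obtain ⟨v, rfl⟩ := LinearMap.mem_range.mp hw
    rw [ContinuousLinearMap.coe_coe, inner_sub_left, ht_def, real_inner_smul_left, hwD v, hDD v]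
    field_simp
    ring
  have hproj : tangentialComponent f p (f p) = t := by
    unfold tangentialComponent
    rw [Submodule.coe_orthogonalProjectionOnto_apply]
    exact Submodule.eq_starProjection_of_mem_of_inner_eq_zero htmem hperp
  -- norms
  have hnw : ‖f p‖ = e := by
    rw [hf p, norm_smul, hsphere p hp, Real.norm_eq_abs, abs_of_pos he, mul_one]
  have hnD : ‖fderiv ℝ f p (1, (0:EuclideanSpace ℝ (Fin (m-1))))‖ = e * Real.sqrt S := by
    have h := hDD (1, 0)
    rw [real_inner_self_eq_norm_sq] at h
    simp only [mul_one] at h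
    calc ‖fderiv ℝ f p (1, (0:EuclideanSpace ℝ (Fin (m-1))))‖
        = Real.sqrt (‖fderiv ℝ f p (1, (0:EuclideanSpace ℝ (Fin (m-1))))‖ ^ 2) :=
          (Real.sqrt_sq (norm_nonneg _)).symm
      _ = Real.sqrt (e ^ 2 * S) := by rw [h]
      _ = e * Real.sqrt S := by
          rw [Real.sqrt_mul (by positivity), Real.sqrt_sq he.le]
  have hnt : ‖t‖ = |A| / Real.sqrt S * e := by
    rw [ht_def, norm_smul, hnD, Real.norm_eq_abs, abs_div, abs_of_pos hS]
    rw [div_mul_eq_mul_div, div_mul_eq_mul_div, div_eq_div_iff hS.ne' hsqpos.ne']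
    linear_combination (|A| * e) * hsq
  have ht2 : ‖t‖ ^ 2 = A ^ 2 * e ^ 2 / S := by
    rw [hnt, mul_pow, div_pow, sq_abs, hsq]
    ring
  have hO : ⟪f p - t, t⟫ = (0:ℝ) := hperp t htmem
  have hNsq : ‖f p - t‖ ^ 2 = e ^ 2 / S := by
    have hpy := norm_add_sq_real (f p - t) t
    rw [sub_add_cancel, hO, hnw, ht2] at hpy
    have h1 : ‖f p - t‖ ^ 2 = e ^ 2 - A ^ 2 * e ^ 2 / S := by linarith
    rw [h1, eq_div_iff hS.ne', sub_mul, div_mul_cancel₀ _ hS.ne', hS_def]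
    ring
  have hnN : ‖f p - t‖ = 1 / Real.sqrt S * e := by
    calc ‖f p - t‖ = Real.sqrt (‖f p - t‖ ^ 2) := (Real.sqrt_sq (norm_nonneg _)).symm
      _ = Real.sqrt (e ^ 2 / S) := by rw [hNsq]
      _ = e / Real.sqrt S := by
          rw [Real.sqrt_div (by positivity), Real.sqrt_sq he.le]
      _ = 1 / Real.sqrt S * e := by ring
  refine ⟨?_, ?_, ?_⟩
  · rw [hproj, hnt, hnw]
  · rw [hproj, hnN, hnw]
  · rw [hproj, hnN, hnt]
    have hAabs : |A| ≠ 0 := abs_ne_zero.2 hA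
    field_simp
end

section
/- Let n ≥ 3, let V ⊆ ℝ^{n−2} be open, let φ₀ : V → EuclideanSpace ℝ (Fin n) and N : V → EuclideanSpace ℝ (Fin n) be smooth with ‖φ₀(x)‖ = 1, ‖N(x)‖ = 1, ⟨N(x), φ₀(x)⟩ = 0, and ⟨N(x), fderiv ℝ φ₀ x v⟩ = 0 for all x ∈ V and v ∈ ℝ^{n−2} (so N is a unit normal to the hypersurface φ₀ of the unit sphere S^{n−1}). Let A ≠ 0 and define f : V × ℝ → EuclideanSpace ℝ (Fin n) by f(x,s) = Real.exp (A·s) • ((Real.cos s) • φ₀(x) + (Real.sin s) • N(x)). Then ‖f(x,s)‖ = Real.exp (A·s) for all (x,s), and for every (x,s) the tangential component of the position vector f(x,s) (the orthogonal projection of f(x,s) onto the range of fderiv ℝ f (x,s)) has norm (|A| / Real.sqrt (1 + A²)) · ‖f(x,s)‖; hence f has the constant ratio property with respect to the radial vector field R(y) = y, with constant ratio ‖R^⊥‖/‖R^T‖ = 1/|A|. -/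
open RealInnerProductSpace

lemma norm_ortho_combo {F : Type*} [NormedAddCommGroup F] [InnerProductSpace ℝ F]
    (φ N : F) (hφ : ‖φ‖ = 1) (hN : ‖N‖ = 1) (h : ⟪N, φ⟫ = 0) (a b : ℝ) :
    ‖a • φ + b • N‖ = Real.sqrt (a ^ 2 + b ^ 2) := by
  have h2 : ‖a • φ + b • N‖ ^ 2 = a ^ 2 + b ^ 2 := by
    rw [norm_add_sq_real, inner_smul_left, inner_smul_right, real_inner_comm, h,
      norm_smul, norm_smul, hφ, hN]
    simp [mul_pow, sq_abs]
  rw [← h2, Real.sqrt_sq (norm_nonneg _)]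


set_option maxHeartbeats 1000000 in
/-- If `φ₀ : V → S^{n-1} ⊂ ℝⁿ` is a hypersurface of the unit sphere with unit normal
`N`, and `φ_s = (cos s) φ₀ + (sin s) N` is the family of parallel hypersurfaces, then
`f(x,s) = e^{As} • φ_s(x)`, `A ≠ 0`, satisfies `‖f(x,s)‖ = e^{As}` and has the
constant ratio property with respect to the radial vector field: the tangential
component of the position vector has norm `(|A|/√(1+A²))‖f(x,s)‖`. -/
theorem stmt10 (n : ℕ) (hn : 3 ≤ n)
    (V : Set (EuclideanSpace ℝ (Fin (n - 2)))) (hV : IsOpen V)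
    (φ₀ N : EuclideanSpace ℝ (Fin (n - 2)) → EuclideanSpace ℝ (Fin n))
    (hφ₀ : ContDiffOn ℝ (⊤ : ℕ∞) φ₀ V) (hNsmooth : ContDiffOn ℝ (⊤ : ℕ∞) N V)
    (hφ₀unit : ∀ x ∈ V, ‖φ₀ x‖ = 1) (hNunit : ∀ x ∈ V, ‖N x‖ = 1)
    (hNorth : ∀ x ∈ V, ⟪N x, φ₀ x⟫ = 0)
    (hNnormal : ∀ x ∈ V, ∀ v : EuclideanSpace ℝ (Fin (n - 2)),
      ⟪N x, fderiv ℝ φ₀ x v⟫ = 0)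
    (A : ℝ) (hA : A ≠ 0)
    (f : EuclideanSpace ℝ (Fin (n - 2)) × ℝ → EuclideanSpace ℝ (Fin n))
    (hf : ∀ p : EuclideanSpace ℝ (Fin (n - 2)) × ℝ,
      f p = Real.exp (A * p.2) • (Real.cos p.2 • φ₀ p.1 + Real.sin p.2 • N p.1)) :
    ∀ x ∈ V, ∀ s : ℝ,
      ‖f (x, s)‖ = Real.exp (A * s) ∧
      ‖tangentialComponent f (x, s) (f (x, s))‖ =
        |A| / Real.sqrt (1 + A ^ 2) * ‖f (x, s)‖ ∧
      ‖f (x, s) - tangentialComponent f (x, s) (f (x, s))‖ /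
          ‖tangentialComponent f (x, s) (f (x, s))‖ = 1 / |A| := by
  have hfe : f = fun q : (EuclideanSpace ℝ (Fin (n - 2))) × ℝ =>
      (Real.exp (A * q.2) * Real.cos q.2) • φ₀ q.1
        + (Real.exp (A * q.2) * Real.sin q.2) • N q.1 := by
    funext q; rw [hf q, smul_add, smul_smul, smul_smul]
  subst hfe
  intro x hx s
  set e := Real.exp (A * s) with he_def
  set c := Real.cos s with hc_def
  set si := Real.sin s with hsi_def
  have he : 0 < e := Real.exp_pos _
  have hcs : c ^ 2 + si ^ 2 = 1 := Real.cos_sq_add_sin_sq s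
  have h1A : (0:ℝ) < 1 + A ^ 2 := by positivity
  have hsqrtA : Real.sqrt (1 + A ^ 2) ^ 2 = 1 + A ^ 2 := Real.sq_sqrt h1A.le
  have hsqrtpos : 0 < Real.sqrt (1 + A ^ 2) := Real.sqrt_pos.2 h1A
  have hmem : V ∈ nhds x := hV.mem_nhds hx
  have hφd : DifferentiableAt ℝ φ₀ x := (hφ₀.contDiffAt hmem).differentiableAt (by simp)
  have hNd : DifferentiableAt ℝ N x := (hNsmooth.contDiffAt hmem).differentiableAt (by simp)
  set P := fderiv ℝ φ₀ x with hP_def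
  set Q := fderiv ℝ N x with hQ_def
  set φ := φ₀ x with hφ_def
  set Nx := N x with hNx_def
  have hφ1 : ‖φ‖ = 1 := hφ₀unit x hx
  have hN1 : ‖Nx‖ = 1 := hNunit x hx
  have hinφφ : ⟪φ, φ⟫ = 1 := by rw [real_inner_self_eq_norm_sq, hφ1]; norm_num
  have hinNN : ⟪Nx, Nx⟫ = 1 := by rw [real_inner_self_eq_norm_sq, hN1]; norm_num
  have hinNφ : ⟪Nx, φ⟫ = 0 := hNorth x hx
  have hinφN : ⟪φ, Nx⟫ = 0 := by rw [real_inner_comm]; exact hinNφ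
  have hNP : ∀ u, ⟪Nx, P u⟫ = 0 := hNnormal x hx
  -- ⟪φ, P u⟫ = 0
  have hφP : ∀ u, ⟪φ, P u⟫ = 0 := by
    intro u
    have hconst : (fun y => ⟪φ₀ y, φ₀ y⟫) =ᶠ[nhds x] fun _ => (1:ℝ) := by
      filter_upwards [hmem] with y hy
      rw [real_inner_self_eq_norm_sq, hφ₀unit y hy]; norm_num
    have h0 : fderiv ℝ (fun y => ⟪φ₀ y, φ₀ y⟫) x = 0 := by
      rw [hconst.fderiv_eq]; exact fderiv_const_apply 1
    have h1 := fderiv_inner_apply (𝕜 := ℝ) hφd hφd u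
    rw [h0] at h1
    simp only [ContinuousLinearMap.zero_apply, ← hP_def, ← hφ_def] at h1
    rw [real_inner_comm]
    linarith [h1, real_inner_comm (P u) φ]
  have hNQ : ∀ u, ⟪Nx, Q u⟫ = 0 := by
    intro u
    have hconst : (fun y => ⟪N y, N y⟫) =ᶠ[nhds x] fun _ => (1:ℝ) := by
      filter_upwards [hmem] with y hy
      rw [real_inner_self_eq_norm_sq, hNunit y hy]; norm_num
    have h0 : fderiv ℝ (fun y => ⟪N y, N y⟫) x = 0 := by
      rw [hconst.fderiv_eq]; exact fderiv_const_apply 1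
    have h1 := fderiv_inner_apply (𝕜 := ℝ) hNd hNd u
    rw [h0] at h1
    simp only [ContinuousLinearMap.zero_apply, ← hQ_def, ← hNx_def] at h1
    rw [real_inner_comm]
    linarith [h1, real_inner_comm (Q u) Nx]
  have hφQ : ∀ u, ⟪φ, Q u⟫ = 0 := by
    intro u
    have hconst : (fun y => ⟪N y, φ₀ y⟫) =ᶠ[nhds x] fun _ => (0:ℝ) := by
      filter_upwards [hmem] with y hy
      exact hNorth y hy
    have h0 : fderiv ℝ (fun y => ⟪N y, φ₀ y⟫) x = 0 := by
      rw [hconst.fderiv_eq]; exact fderiv_const_apply 0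
    have h1 := fderiv_inner_apply (𝕜 := ℝ) hNd hφd u
    rw [h0] at h1
    simp only [ContinuousLinearMap.zero_apply, ← hQ_def, ← hP_def, ← hφ_def, ← hNx_def] at h1
    rw [hNP u] at h1
    rw [real_inner_comm]
    linarith [h1]
  -- the derivative of f
  have hexp : HasDerivAt (fun t : ℝ => Real.exp (A * t)) (e * A) s := by
    simpa [he_def] using ((hasDerivAt_id s).const_mul A).exp
  have hg1 : HasDerivAt (fun t : ℝ => Real.exp (A * t) * Real.cos t)
      (A * e * c - e * si) s := by
    have := hexp.mul (Real.hasDerivAt_cos s)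
    exact this.congr_deriv (by rw [← hc_def, ← hsi_def, ← he_def]; ring)
  have hg2 : HasDerivAt (fun t : ℝ => Real.exp (A * t) * Real.sin t)
      (A * e * si + e * c) s := by
    have := hexp.mul (Real.hasDerivAt_sin s)
    exact this.congr_deriv (by rw [← hc_def, ← hsi_def, ← he_def]; ring)
  have hF1 : HasFDerivAt (fun q : (EuclideanSpace ℝ (Fin (n - 2))) × ℝ =>
      Real.exp (A * q.2) * Real.cos q.2)
      ((A * e * c - e * si) • ContinuousLinearMap.snd ℝ (EuclideanSpace ℝ (Fin (n - 2))) ℝ)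
      (x, s) :=
    HasDerivAt.comp_hasFDerivAt (f := Prod.snd) (x, s) hg1 hasFDerivAt_snd
  have hF2 : HasFDerivAt (fun q : (EuclideanSpace ℝ (Fin (n - 2))) × ℝ =>
      Real.exp (A * q.2) * Real.sin q.2)
      ((A * e * si + e * c) • ContinuousLinearMap.snd ℝ (EuclideanSpace ℝ (Fin (n - 2))) ℝ)
      (x, s) :=
    HasDerivAt.comp_hasFDerivAt (f := Prod.snd) (x, s) hg2 hasFDerivAt_snd
  have hφF : HasFDerivAt (fun q : (EuclideanSpace ℝ (Fin (n - 2))) × ℝ => φ₀ q.1)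
      (P.comp (ContinuousLinearMap.fst ℝ (EuclideanSpace ℝ (Fin (n - 2))) ℝ)) (x, s) :=
    hφd.hasFDerivAt.comp (x, s) hasFDerivAt_fst
  have hNF : HasFDerivAt (fun q : (EuclideanSpace ℝ (Fin (n - 2))) × ℝ => N q.1)
      (Q.comp (ContinuousLinearMap.fst ℝ (EuclideanSpace ℝ (Fin (n - 2))) ℝ)) (x, s) :=
    hNd.hasFDerivAt.comp (x, s) hasFDerivAt_fst
  have htot := (hF1.smul hφF).add (hF2.smul hNF)
  set Ltot := ((e * c) •
        P.comp (ContinuousLinearMap.fst ℝ (EuclideanSpace ℝ (Fin (n - 2))) ℝ) +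
      ((A * e * c - e * si) •
          ContinuousLinearMap.snd ℝ (EuclideanSpace ℝ (Fin (n - 2))) ℝ).smulRight φ) +
      ((e * si) •
        Q.comp (ContinuousLinearMap.fst ℝ (EuclideanSpace ℝ (Fin (n - 2))) ℝ) +
      ((A * e * si + e * c) •
          ContinuousLinearMap.snd ℝ (EuclideanSpace ℝ (Fin (n - 2))) ℝ).smulRight Nx)
    with hLtot_def
  have hDf : fderiv ℝ (fun q : (EuclideanSpace ℝ (Fin (n - 2))) × ℝ =>
      (Real.exp (A * q.2) * Real.cos q.2) • φ₀ q.1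
        + (Real.exp (A * q.2) * Real.sin q.2) • N q.1) (x, s) = Ltot := htot.fderiv
  have hLapp : ∀ u : EuclideanSpace ℝ (Fin (n - 2)), ∀ t : ℝ,
      Ltot (u, t) = ((A * e * c - e * si) * t) • φ + (e * c) • P u
        + (((A * e * si + e * c) * t) • Nx + (e * si) • Q u) := by
    intro u t
    simp only [hLtot_def, ContinuousLinearMap.add_apply, ContinuousLinearMap.coe_smul',
      Pi.smul_apply, ContinuousLinearMap.smulRight_apply, ContinuousLinearMap.coe_comp',
      Function.comp_apply, ContinuousLinearMap.coe_fst', ContinuousLinearMap.coe_snd',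
      smul_eq_mul]
    module
  have habs : |A| ≠ 0 := abs_ne_zero.2 hA
  set τ := A / (1 + A ^ 2) with hτ_def
  set v : EuclideanSpace ℝ (Fin n) :=
    (τ * (A * e * c - e * si)) • φ + (τ * (A * e * si + e * c)) • Nx with hv_def
  have hfxs : (fun q : (EuclideanSpace ℝ (Fin (n - 2))) × ℝ =>
      (Real.exp (A * q.2) * Real.cos q.2) • φ₀ q.1
        + (Real.exp (A * q.2) * Real.sin q.2) • N q.1) (x, s)
      = (e * c) • φ + (e * si) • Nx := rfl
  -- the tangential component equals v
  have htc : tangentialComponent (fun q : (EuclideanSpace ℝ (Fin (n - 2))) × ℝ =>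
      (Real.exp (A * q.2) * Real.cos q.2) • φ₀ q.1
        + (Real.exp (A * q.2) * Real.sin q.2) • N q.1) (x, s)
      ((fun q : (EuclideanSpace ℝ (Fin (n - 2))) × ℝ =>
      (Real.exp (A * q.2) * Real.cos q.2) • φ₀ q.1
        + (Real.exp (A * q.2) * Real.sin q.2) • N q.1) (x, s)) = v := by
    unfold tangentialComponent
    apply Submodule.eq_starProjection_of_mem_of_inner_eq_zero
    · exact ⟨(0, τ), by
        rw [hDf, ContinuousLinearMap.coe_coe, hLapp 0 τ]; simp only [map_zero, smul_zero]; rw [hv_def]; module⟩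
    · rintro w ⟨⟨u, t⟩, rfl⟩
      rw [hDf, ContinuousLinearMap.coe_coe, hLapp u t, hfxs, hv_def]
      simp only [inner_sub_left, inner_add_left, inner_add_right, inner_smul_left,
        inner_smul_right, hinφφ, hinNN, hinφN, hinNφ, hφP, hNP, hφQ, hNQ,
        RCLike.star_def, conj_trivial, mul_zero, mul_one, add_zero, zero_add, hτ_def]
      field_simp
      ring
  have hnf : ‖(e * c) • φ + (e * si) • Nx‖ = e := by
    rw [norm_ortho_combo φ Nx hφ1 hN1 hinNφ]
    have h2 : (e * c) ^ 2 + (e * si) ^ 2 = e ^ 2 := by linear_combination e ^ 2 * hcs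
    rw [h2, Real.sqrt_sq he.le]
  have hnv : ‖v‖ = |A| / Real.sqrt (1 + A ^ 2) * e := by
    rw [hv_def, norm_ortho_combo φ Nx hφ1 hN1 hinNφ]
    have hr : (|A| / Real.sqrt (1 + A ^ 2) * e) ^ 2 = A ^ 2 * e ^ 2 / (1 + A ^ 2) := by
      rw [mul_pow, div_pow, sq_abs, hsqrtA]; ring
    have h2 : (τ * (A * e * c - e * si)) ^ 2 + (τ * (A * e * si + e * c)) ^ 2
        = A ^ 2 * e ^ 2 / (1 + A ^ 2) := by
      rw [hτ_def]
      field_simp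
      linear_combination (1 + A ^ 2) * hcs
    rw [h2, ← hr,
      Real.sqrt_sq (by positivity : (0:ℝ) ≤ |A| / Real.sqrt (1 + A ^ 2) * e)]
  have hnsub : ‖(e * c) • φ + (e * si) • Nx - v‖ = e / Real.sqrt (1 + A ^ 2) := by
    have hsub : (e * c) • φ + (e * si) • Nx - v
        = (e * c - τ * (A * e * c - e * si)) • φ
          + (e * si - τ * (A * e * si + e * c)) • Nx := by
      rw [hv_def]; module
    rw [hsub, norm_ortho_combo φ Nx hφ1 hN1 hinNφ]
    have hr : (e / Real.sqrt (1 + A ^ 2)) ^ 2 = e ^ 2 / (1 + A ^ 2) := by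
      rw [div_pow, hsqrtA]
    have h2 : (e * c - τ * (A * e * c - e * si)) ^ 2
        + (e * si - τ * (A * e * si + e * c)) ^ 2
        = e ^ 2 / (1 + A ^ 2) := by
      rw [hτ_def]
      field_simp
      linear_combination (1 + A ^ 2) * hcs
    rw [h2, ← hr, Real.sqrt_sq (by positivity : (0:ℝ) ≤ e / Real.sqrt (1 + A ^ 2))]
  refine ⟨by rw [hfxs]; exact hnf, ?_, ?_⟩
  · rw [htc, hnv, hfxs, hnf]
  · rw [htc, hfxs, hnv, hnsub]
    field_simp
end

section
/- Let m ≥ 2, n ≥ 1, let U ⊆ ℝ × ℝ^{m−1} be open with points written p = (s,x), let φ : U → EuclideanSpace ℝ (Fin n) be smooth satisfying the polar-metric conditions and with ‖φ(p)‖ = 1 for all p ∈ U, and let C ∈ ℝ be such that Real.cos (s + C) ≠ 0 for all (s,x) ∈ U. Define f : U → EuclideanSpace ℝ (Fin n) by f(s,x) = (Real.cos (s + C))⁻¹ • φ(s,x). Then for every p ∈ U the normal component of the position vector f(p) (that is, f(p) minus its orthogonal projection onto the range of fderiv ℝ f p) has norm 1. In other words, f is an N-constant submanifold: ‖R^⊥_f‖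 ≡ 1 for the radial vector field R(y) = y. -/
open RealInnerProductSpace

set_option maxHeartbeats 1000000 in
/-- If `φ : U ⊆ ℝ × ℝ^{m-1} → Sⁿ⁻¹ ⊂ ℝⁿ` is smooth and satisfies the polar-metric
conditions, and `cos(s+C) ≠ 0` on `U`, then `f(s,x) = sec(s+C) • φ(s,x)` is an
`N`-constant submanifold: the normal component of the position vector `f(p)` has
norm `1` at every point. -/
theorem stmt13 (m n : ℕ) (hm : 2 ≤ m) (hn : 1 ≤ n)
    (U : Set (ℝ × EuclideanSpace ℝ (Fin (m - 1)))) (hU : IsOpen U)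
    (φ : ℝ × EuclideanSpace ℝ (Fin (m - 1)) → EuclideanSpace ℝ (Fin n))
    (hφ : ContDiffOn ℝ (⊤ : ℕ∞) φ U)
    (hsphere : ∀ p ∈ U, ‖φ p‖ = 1)
    (hpolar1 : ∀ p ∈ U, ⟪fderiv ℝ φ p (1, 0), fderiv ℝ φ p (1, 0)⟫ = 1)
    (hpolar2 : ∀ p ∈ U, ∀ i : Fin (m - 1),
      ⟪fderiv ℝ φ p (1, 0), fderiv ℝ φ p (0, EuclideanSpace.single i 1)⟫ = 0)
    (C : ℝ) (hC : ∀ p ∈ U, Real.cos (p.1 + C) ≠ 0)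
    (f : ℝ × EuclideanSpace ℝ (Fin (m - 1)) → EuclideanSpace ℝ (Fin n))
    (hf : ∀ p, f p = (Real.cos (p.1 + C))⁻¹ • φ p) :
    ∀ p ∈ U, ‖f p - tangentialComponent f p (f p)‖ = 1 := by
  intro p hp
  classical
  have hmem : U ∈ nhds p := hU.mem_nhds hp
  have hφd : DifferentiableAt ℝ φ p := (hφ.contDiffAt hmem).differentiableAt (by simp)
  have hp1 := hpolar1 p hp
  have hp2 := hpolar2 p hp
  have hfp := hf p
  set c : ℝ := Real.cos (p.1 + C) with hc_def
  set t : ℝ := Real.sin (p.1 + C) with ht_def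
  have hc0 : c ≠ 0 := hC p hp
  have hct : t ^ 2 + c ^ 2 = 1 := Real.sin_sq_add_cos_sq (p.1 + C)
  set A := fderiv ℝ φ p with hA
  set Φ := φ p with hΦ
  set Φs := A ((1 : ℝ), (0 : EuclideanSpace ℝ (Fin (m - 1)))) with hΦs
  -- basic inner products
  have hΦΦ : ⟪Φ, Φ⟫ = 1 := by
    rw [real_inner_self_eq_norm_sq, hsphere p hp]; norm_num
  -- Φ ⟂ A v
  have hperp : ∀ v, ⟪Φ, A v⟫ = 0 := by
    intro v
    have heq : (fun q => (inner ℝ (φ q) (φ q) : ℝ)) =ᶠ[nhds p] fun _ => (1 : ℝ) :=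
      Filter.eventually_of_mem hmem (fun q hq => by
        show (inner ℝ (φ q) (φ q) : ℝ) = 1
        rw [real_inner_self_eq_norm_sq, hsphere q hq]; norm_num)
    have h0 : fderiv ℝ (fun q => (inner ℝ (φ q) (φ q) : ℝ)) p = 0 := by
      rw [heq.fderiv_eq]; simp
    have h1 := fderiv_inner_apply ℝ hφd hφd v
    rw [h0] at h1
    simp only [ContinuousLinearMap.zero_apply] at h1
    have h2 : (inner ℝ (A v) Φ : ℝ) = inner ℝ Φ (A v) := real_inner_comm _ _
    rw [h2] at h1
    linarith
  have hΦΦs : ⟪Φ, Φs⟫ = 0 := hperp _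
  have hΦsΦ : ⟪Φs, Φ⟫ = 0 := by rw [real_inner_comm]; exact hΦΦs
  -- ⟪Φs, A v⟫ = v.1
  have h3 : ∀ v : ℝ × EuclideanSpace ℝ (Fin (m - 1)), ⟪Φs, A v⟫ = v.1 := by
    intro v
    have hxsum : ∑ i, v.2 i • EuclideanSpace.single i (1 : ℝ) = v.2 := by
      have := (EuclideanSpace.basisFun (Fin (m - 1)) ℝ).sum_repr v.2
      simpa [EuclideanSpace.basisFun_apply, EuclideanSpace.basisFun_repr] using this
    have hv : v = v.1 • ((1 : ℝ), (0 : EuclideanSpace ℝ (Fin (m - 1)))) + ((0 : ℝ), v.2) := by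
      apply Prod.ext <;> simp
    have hpair : ((0 : ℝ), v.2) = ∑ i, v.2 i •
        ((0 : ℝ), EuclideanSpace.single i (1 : ℝ)) := by
      apply Prod.ext
      · simp [Prod.fst_sum]
      · simp [Prod.snd_sum, hxsum]
    conv_lhs => rw [hv, hpair]
    rw [map_add, map_smul, inner_add_right, real_inner_smul_right, hp1,
      map_sum, inner_sum]
    simp only [map_smul, real_inner_smul_right]
    rw [Finset.sum_eq_zero (fun i _ => by rw [hp2 i]; ring)]
    ring
  -- derivative of f
  set L : (ℝ × EuclideanSpace ℝ (Fin (m - 1))) →L[ℝ] ℝ :=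
    ContinuousLinearMap.fst ℝ ℝ (EuclideanSpace ℝ (Fin (m - 1))) with hL
  have hadd : HasFDerivAt (fun q : ℝ × EuclideanSpace ℝ (Fin (m - 1)) => q.1 + C) L p :=
    hasFDerivAt_fst.add_const C
  have hcosd : HasFDerivAt (fun q : ℝ × EuclideanSpace ℝ (Fin (m - 1)) =>
      Real.cos (q.1 + C)) ((-t) • L) p :=
    by have := (Real.hasDerivAt_cos (p.1 + C)).comp_hasFDerivAt p hadd; exact this
  have hgd : HasFDerivAt (fun q : ℝ × EuclideanSpace ℝ (Fin (m - 1)) =>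
      (Real.cos (q.1 + C))⁻¹) ((-(c ^ 2)⁻¹) • ((-t) • L)) p :=
    (hasDerivAt_inv hc0).comp_hasFDerivAt p hcosd
  have hfd : HasFDerivAt f
      (c⁻¹ • A + ((-(c ^ 2)⁻¹) • ((-t) • L)).smulRight Φ) p := by
    have h := hgd.smul hφd.hasFDerivAt
    exact h.congr_of_eventuallyEq (Filter.Eventually.of_forall hf)
  set B := fderiv ℝ f p with hBdef
  have hB : B = c⁻¹ • A + ((-(c ^ 2)⁻¹) • ((-t) • L)).smulRight Φ := hfd.fderiv
  have hBv : ∀ v : ℝ × EuclideanSpace ℝ (Fin (m - 1)),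
      B v = c⁻¹ • A v + ((t / c ^ 2) * v.1) • Φ := by
    intro v
    rw [hB]
    simp only [ContinuousLinearMap.add_apply, ContinuousLinearMap.smul_apply,
      ContinuousLinearMap.smulRight_apply, ContinuousLinearMap.coe_fst', hL, smul_smul,
      smul_eq_mul]
    congr 2
    ring
  -- the normal vector
  set N : EuclideanSpace ℝ (Fin n) := c • Φ - t • Φs with hN
  have hNA : ∀ v : ℝ × EuclideanSpace ℝ (Fin (m - 1)), ⟪N, A v⟫ = -(t * v.1) := by
    intro v
    rw [hN, inner_sub_left, real_inner_smul_left, real_inner_smul_left, hperp, h3]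
    ring
  have hNΦ : ⟪N, Φ⟫ = c := by
    rw [hN, inner_sub_left, real_inner_smul_left, real_inner_smul_left, hΦΦ, hΦsΦ]
    ring
  have hNB : ∀ v : ℝ × EuclideanSpace ℝ (Fin (m - 1)), ⟪N, B v⟫ = 0 := by
    intro v
    rw [hBv, inner_add_right, real_inner_smul_right, real_inner_smul_right, hNA, hNΦ]
    field_simp
    ring
  have key : f p - N = (t * c) • B ((1 : ℝ), (0 : EuclideanSpace ℝ (Fin (m - 1)))) := by
    rw [hBv, hfp, hN]
    simp only [smul_add, smul_smul]
    match_scalars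
    · field_simp
      linear_combination (-1 : ℝ) * hct
    · field_simp
  have hmemrange : f p - N ∈ LinearMap.range (fderiv ℝ f p :
      (ℝ × EuclideanSpace ℝ (Fin (m - 1))) →ₗ[ℝ] EuclideanSpace ℝ (Fin n)) := by
    refine ⟨(t * c) • ((1 : ℝ), (0 : EuclideanSpace ℝ (Fin (m - 1)))), ?_⟩
    rw [map_smul]
    exact key.symm
  have hproj : (Submodule.orthogonalProjectionOnto (LinearMap.range (fderiv ℝ f p :
      (ℝ × EuclideanSpace ℝ (Fin (m - 1))) →ₗ[ℝ] EuclideanSpace ℝ (Fin n))) (f p) :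
      EuclideanSpace ℝ (Fin n)) = f p - N := by
    rw [← Submodule.starProjection_apply]
    apply Submodule.eq_starProjection_of_mem_of_inner_eq_zero hmemrange
    intro w hw
    obtain ⟨v, rfl⟩ := hw
    have h4 : f p - (f p - N) = N := by abel
    rw [h4]
    exact hNB v
  rw [tangentialComponent, hproj]
  have h5 : f p - (f p - N) = N := by abel
  rw [h5]
  have hNN : ⟪N, N⟫ = 1 := by
    rw [hN, inner_sub_left, inner_sub_right, inner_sub_right, real_inner_smul_left,
      real_inner_smul_left, real_inner_smul_left, real_inner_smul_left,
      real_inner_smul_right, real_inner_smul_right, real_inner_smul_right,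
      real_inner_smul_right, hΦΦ, hΦΦs, hΦsΦ, hp1]
    linear_combination hct
  have hnorm : ‖N‖ ^ 2 = 1 := by rw [← real_inner_self_eq_norm_sq, hNN]
  calc ‖N‖ = Real.sqrt (‖N‖ ^ 2) := (Real.sqrt_sq (norm_nonneg N)).symm
    _ = Real.sqrt 1 := by rw [hnorm]
    _ = 1 := Real.sqrt_one
end

section
/- Let m ≥ 2, n ≥ 1, let U ⊆ ℝ × ℝ^{m−1} be open with points written p = (s,x), let φ : U → EuclideanSpace ℝ (Fin n) be smooth satisfying the polar-metric conditions and with ‖φ(p)‖ = 1 for all p ∈ U. Let C ∈ ℝ and let G be a differentiable real function defined on an open set containing {s + C : (s,x) ∈ U} such that G(y) − Real.arctan (G(y)) = y and G(y) ≠ 0 for all such y (G is the inverse of x ↦ x − arctan x). Define f : U → EuclideanSpace ℝ (Fin n) by f(s,x) = Real.sqrt (1 + (G (s + C))²) • φ(s,x). Then for every p ∈ U the tangential component of the position vector f(p) (the orthogonal projection of f(p) onto the range of fderiv ℝ f p) has norm 1. In other words, f is a T-constant submanifold: ‖R^T_f‖ ≡ 1 for the radial vector field R(y) = y. -/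
open RealInnerProductSpace

set_option maxHeartbeats 2000000 in
/-- If `φ : U ⊆ ℝ × ℝ^{m-1} → Sⁿ⁻¹ ⊂ ℝⁿ` is smooth and satisfies the polar-metric
conditions, and `G` is (on an open set containing the values `s + C`) a nonvanishing
differentiable inverse of `x ↦ x - arctan x`, then
`f(s,x) = √(1 + G(s+C)²) • φ(s,x)` is a `T`-constant submanifold: the tangential
component of the position vector `f(p)` has norm `1` at every point. -/
theorem stmt14 (m n : ℕ) (hm : 2 ≤ m) (hn : 1 ≤ n)
    (U : Set (ℝ × EuclideanSpace ℝ (Fin (m - 1)))) (hU : IsOpen U)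
    (φ : ℝ × EuclideanSpace ℝ (Fin (m - 1)) → EuclideanSpace ℝ (Fin n))
    (hφ : ContDiffOn ℝ (⊤ : ℕ∞) φ U)
    (hsphere : ∀ p ∈ U, ‖φ p‖ = 1)
    (hpolar1 : ∀ p ∈ U, ⟪fderiv ℝ φ p (1, 0), fderiv ℝ φ p (1, 0)⟫ = 1)
    (hpolar2 : ∀ p ∈ U, ∀ i : Fin (m - 1),
      ⟪fderiv ℝ φ p (1, 0), fderiv ℝ φ p (0, EuclideanSpace.single i 1)⟫ = 0)
    (C : ℝ) (G : ℝ → ℝ) (W : Set ℝ) (hWopen : IsOpen W)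
    (hW : ∀ p ∈ U, p.1 + C ∈ W)
    (hGdiff : ∀ y ∈ W, DifferentiableAt ℝ G y)
    (hGinv : ∀ y ∈ W, G y - Real.arctan (G y) = y)
    (hGne : ∀ y ∈ W, G y ≠ 0)
    (f : ℝ × EuclideanSpace ℝ (Fin (m - 1)) → EuclideanSpace ℝ (Fin n))
    (hf : ∀ p, f p = Real.sqrt (1 + (G (p.1 + C)) ^ 2) • φ p) :
    ∀ p ∈ U, ‖tangentialComponent f p (f p)‖ = 1 := by
  intro p hp
  have hfe : f = fun q => Real.sqrt (1 + (G (q.1 + C)) ^ 2) • φ q := funext hf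
  have hWp : p.1 + C ∈ W := hW p hp
  have ht : G (p.1 + C) ≠ 0 := hGne _ hWp
  have hGd : DifferentiableAt ℝ G (p.1 + C) := hGdiff _ hWp
  have htt : (0:ℝ) < 1 + (G (p.1 + C)) ^ 2 := by positivity
  -- derivative of G from the inverse relation
  have hG' : deriv G (p.1 + C) = (1 + (G (p.1 + C)) ^ 2) / (G (p.1 + C)) ^ 2 := by
    have hH : HasDerivAt (fun y => G y - Real.arctan (G y))
        (deriv G (p.1 + C) - 1 / (1 + (G (p.1 + C)) ^ 2) * deriv G (p.1 + C)) (p.1 + C) :=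
      (hGd.hasDerivAt).sub
        ((Real.hasDerivAt_arctan (G (p.1 + C))).comp (p.1 + C) hGd.hasDerivAt)
    have hid : HasDerivAt (fun y => G y - Real.arctan (G y)) 1 (p.1 + C) := by
      have hEq : (fun y : ℝ => y) =ᶠ[nhds (p.1 + C)] fun y => G y - Real.arctan (G y) := by
        filter_upwards [hWopen.mem_nhds hWp] with y hy
        exact (hGinv y hy).symm
      exact (hasDerivAt_id (p.1 + C)).congr_of_eventuallyEq hEq.symm
    have he : deriv G (p.1 + C) - 1 / (1 + (G (p.1 + C)) ^ 2) * deriv G (p.1 + C) = 1 :=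
      hH.unique hid
    field_simp at he ⊢
    nlinarith [he]
  -- derivative of the radial factor
  have hh : HasDerivAt (fun s : ℝ => Real.sqrt (1 + (G (s + C)) ^ 2))
      ((1 + (G (p.1 + C)) ^ 2) / (G (p.1 + C) * Real.sqrt (1 + (G (p.1 + C)) ^ 2))) p.1 := by
    have h1 : HasDerivAt (fun s : ℝ => G (s + C)) (deriv G (p.1 + C) * 1) p.1 :=
      HasDerivAt.comp p.1 hGd.hasDerivAt ((hasDerivAt_id p.1).add_const C)
    have h2 : HasDerivAt (fun s : ℝ => 1 + (G (s + C)) ^ 2)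
        ((2 : ℕ) * (G (p.1 + C)) ^ 1 * (deriv G (p.1 + C) * 1)) p.1 := (h1.pow 2).const_add 1
    have h3 := (Real.hasDerivAt_sqrt (x := 1 + (G (p.1 + C)) ^ 2) (ne_of_gt htt)).comp p.1 h2
    have hs0 : Real.sqrt (1 + (G (p.1 + C)) ^ 2) ≠ 0 :=
      ne_of_gt (Real.sqrt_pos.mpr htt)
    have heq : 1 / (2 * Real.sqrt (1 + (G (p.1 + C)) ^ 2)) *
        ((2 : ℕ) * (G (p.1 + C)) ^ 1 * (deriv G (p.1 + C) * 1)) =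
        (1 + (G (p.1 + C)) ^ 2) / (G (p.1 + C) * Real.sqrt (1 + (G (p.1 + C)) ^ 2)) := by
      rw [hG']
      push_cast
      field_simp
    exact heq ▸ h3
  -- abbreviations for the point values
  set t : ℝ := G (p.1 + C) with htdef
  set r : ℝ := Real.sqrt (1 + t ^ 2) with hrdef
  set r' : ℝ := (1 + t ^ 2) / (t * r) with hr'def
  have hr2 : r ^ 2 = 1 + t ^ 2 := Real.sq_sqrt htt.le
  have hrpos : 0 < r := Real.sqrt_pos.mpr htt
  have hrne : r ≠ 0 := ne_of_gt hrpos
  -- derivative of f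
  have hφd : DifferentiableAt ℝ φ p :=
    (hφ.differentiableOn (by simp)).differentiableAt (hU.mem_nhds hp)
  set Dφ := fderiv ℝ φ p with hDφdef
  have hφ' : HasFDerivAt φ Dφ p := hφd.hasFDerivAt
  have hg : HasFDerivAt (fun q : ℝ × EuclideanSpace ℝ (Fin (m - 1)) =>
      Real.sqrt (1 + (G (q.1 + C)) ^ 2))
      (r' • ContinuousLinearMap.fst ℝ ℝ (EuclideanSpace ℝ (Fin (m - 1)))) p :=
    hh.comp_hasFDerivAt p (hasFDerivAt_fst)
  set Df : ℝ × EuclideanSpace ℝ (Fin (m - 1)) →L[ℝ] EuclideanSpace ℝ (Fin n) :=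
    r • Dφ + (r' • ContinuousLinearMap.fst ℝ ℝ
      (EuclideanSpace ℝ (Fin (m - 1)))).smulRight (φ p) with hDfdef
  have hfD : HasFDerivAt f Df p := by
    rw [hfe]
    exact hg.smul hφ'
  have hfderiv : fderiv ℝ f p = Df := hfD.fderiv
  have hDfapp : ∀ w : ℝ × EuclideanSpace ℝ (Fin (m - 1)),
      Df w = r • Dφ w + (r' * w.1) • φ p := by
    intro w
    simp [hDfdef, ContinuousLinearMap.smulRight_apply, smul_smul]
  -- Fact A : φ p is orthogonal to all derivatives of φ
  have innA : ∀ w, ⟪φ p, Dφ w⟫ = 0 := by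
    intro w
    have hconst : (fun q => ⟪φ q, φ q⟫) =ᶠ[nhds p] fun _ => (1:ℝ) := by
      filter_upwards [hU.mem_nhds hp] with q hq
      rw [real_inner_self_eq_norm_sq, hsphere q hq]; norm_num
    have h1 : HasFDerivAt (fun q => ⟪φ q, φ q⟫) (0 : _ →L[ℝ] ℝ) p :=
      (hasFDerivAt_const (1:ℝ) p).congr_of_eventuallyEq hconst
    have h2 := hφ'.inner ℝ hφ'
    have h3 := h1.unique h2
    have h4 : ((fderivInnerCLM ℝ (φ p, φ p)).comp (Dφ.prod Dφ)) w = 0 := by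
      rw [← h3]; rfl
    rw [ContinuousLinearMap.comp_apply, fderivInnerCLM_apply] at h4
    simp only [ContinuousLinearMap.prod_apply] at h4
    rw [real_inner_comm (φ p) (Dφ w)] at h4
    linarith
  -- Fact B : ∂φ/∂s orthogonal to all x-derivatives
  have innB : ∀ x : EuclideanSpace ℝ (Fin (m - 1)), ⟪Dφ (1, 0), Dφ (0, x)⟫ = 0 := by
    intro x
    have hx2 : x = ∑ i, x i • EuclideanSpace.single i (1:ℝ) := by
      have := (EuclideanSpace.basisFun (Fin (m-1)) ℝ).sum_repr x
      simpa [EuclideanSpace.basisFun_apply, EuclideanSpace.basisFun_repr] using this.symm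
    have hx : ((0 : ℝ), x) =
        ∑ i, x i • ((0:ℝ), EuclideanSpace.single i (1:ℝ)) := by
      rw [Prod.ext_iff]
      refine ⟨?_, ?_⟩
      · rw [Prod.fst_sum]; simp
      · rw [Prod.snd_sum]; simpa using hx2
    rw [hx, map_sum, inner_sum]
    refine Finset.sum_eq_zero fun i _ => ?_
    rw [map_smul, real_inner_smul_right, hpolar2 p hp i, mul_zero]
  -- abbreviations
  set a := Dφ (1, 0) with hadef
  set b := φ p with hbdef
  have haa : ⟪a, a⟫ = 1 := hpolar1 p hp
  have hbb : ⟪b, b⟫ = 1 := by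
    rw [real_inner_self_eq_norm_sq, hsphere p hp]; norm_num
  have hab : ⟪a, b⟫ = 0 := by rw [real_inner_comm]; exact innA _
  have hba : ⟪b, a⟫ = 0 := innA _
  set v := Df (1, 0) with hvdef
  have hv : v = r • a + r' • b := by
    rw [hvdef, hDfapp]; norm_num; rfl
  have hfp : f p = r • b := hf p
  have hvv : ⟪v, v⟫ = r ^ 2 + r' ^ 2 := by
    rw [hv]
    simp only [inner_add_add_self, real_inner_smul_left, real_inner_smul_right,
      haa, hbb, hab, hba]
    ring
  have hfv : ⟪f p, v⟫ = r * r' := by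
    rw [hfp, hv]
    simp only [inner_add_right, real_inner_smul_left, real_inner_smul_right,
      hba, hbb]
    ring
  -- numerics
  have hrr' : r * r' = (1 + t ^ 2) / t := by
    rw [hr'def]
    field_simp
  have hr'sq : r' ^ 2 = (1 + t ^ 2) / t ^ 2 := by
    rw [hr'def, div_pow, mul_pow, hr2]
    rw [div_eq_div_iff (by positivity) (by positivity)]
    ring
  have hsum : r ^ 2 + r' ^ 2 = (1 + t ^ 2) ^ 2 / t ^ 2 := by
    rw [hr'sq, hr2]
    field_simp
    ring
  have hsumpos : 0 < r ^ 2 + r' ^ 2 := by positivity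
  set α : ℝ := r * r' / (r ^ 2 + r' ^ 2) with hαdef
  -- the projection is α • v
  have hproj : tangentialComponent f p (f p) = α • v := by
    unfold tangentialComponent
    apply Submodule.eq_starProjection_of_mem_of_inner_eq_zero
    · refine Submodule.smul_mem _ α ⟨(1, 0), ?_⟩
      rw [hfderiv]; rfl
    · rintro w ⟨u, rfl⟩
      rw [hfderiv]
      have hu : (u : ℝ × EuclideanSpace ℝ (Fin (m - 1)))
          = u.1 • ((1:ℝ), (0 : EuclideanSpace ℝ (Fin (m - 1)))) + ((0:ℝ), u.2) := by
        ext <;> simp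
      have hDu : Df u = u.1 • v + r • Dφ (0, u.2) := by
        conv_lhs => rw [hu]
        rw [map_add, map_smul, ← hvdef, hDfapp]
        simp
      show ⟪f p - α • v, Df u⟫ = 0
      rw [hDu]
      have hfψ : ⟪f p, Dφ (0, u.2)⟫ = 0 := by
        rw [hfp, real_inner_smul_left, hbdef, innA, mul_zero]
      have hvψ : ⟪v, Dφ (0, u.2)⟫ = 0 := by
        rw [hv, inner_add_left, real_inner_smul_left, real_inner_smul_left,
          hadef, innB, hbdef, innA]
        ring
      simp only [inner_sub_left, inner_add_right, real_inner_smul_left,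
        real_inner_smul_right]
      rw [hfv, hvv, hfψ, hvψ, hαdef]
      have hne : r ^ 2 + r' ^ 2 ≠ 0 := ne_of_gt hsumpos
      field_simp
      ring
  rw [hproj]
  -- compute the norm
  have hnorm2 : ‖α • v‖ ^ 2 = 1 := by
    rw [← real_inner_self_eq_norm_sq, real_inner_smul_left, real_inner_smul_right, hvv,
      hαdef, hrr', hsum]
    field_simp
  have h0 : 0 ≤ ‖α • v‖ := norm_nonneg _
  nlinarith [hnorm2, h0]
end

section
/- Let A ≠ 0 and define f : ℝ² → ℝ³ by f(t,s) = (t, Real.exp (−s) · Real.cos (A·s), Real.exp (−s) · Real.sin (A·s)) (the cylinder over a logarithmic spiral), and let K : ℝ³ → ℝ³ be the Killing vector field K(x,y,z) = (0, −z, y) generating rotations about the x-axis. Then for every (t,s) ∈ ℝ²: ‖K(f(t,s))‖ = Real.exp (−s), and the tangential component of K(f(t,s)) at (t,s) (the orthogonal projection of K(f(t,s)) onto the range of fderiv ℝ f (t,s)) has norm (|A| / Real.sqrt (1 + A²)) · ‖K(f(t,s))‖. In particular the ratio of the norms of the normal and tangential components of K along f is the constant 1/|A|, i.e. the cylinder over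 the logarithmic spiral has the constant ratio property with respect to the Killing vector field K. -/
/-!
The cylinder `(t, s) ↦ t e + γ(s)` over the logarithmic spiral
`γ(s) = e^{-s} (cos (A s) u + sin (A s) v)` has tangent plane spanned by `e` and
`γ'(s) = -γ(s) + A J γ(s)`, where `J` is the quarter turn of the `(u, v)`-plane, and
`J γ(s)` is the value of the Killing field on the cylinder. Since `J γ` is orthogonal to `e` and
to `γ`, its tangential component is its projection onto `γ'`, namely
`A / (1 + A²) • γ'`; as `‖γ‖ = ‖J γ‖ = e^{-s}` this has norm `|A| e^{-s} / √(1 + A²)`,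
and Pythagoras leaves `e^{-s} / √(1 + A²)` for the normal component.
-/

open RealInnerProductSpace

open Real

theorem norm_sub_tangentialComponent_sq {E F : Type*} [NormedAddCommGroup E] [NormedSpace ℝ E]
    [NormedAddCommGroup F] [InnerProductSpace ℝ F] [FiniteDimensional ℝ F] (f : E → F) (p : E)
    (w : F) : ‖w - tangentialComponent f p w‖ ^ 2 = ‖w‖ ^ 2 - ‖tangentialComponent f p w‖ ^ 2 := by
  rw [tangentialComponent, Submodule.coe_orthogonalProjectionOnto_apply,
    ← Submodule.starProjection_orthogonal_val,
    Submodule.norm_sq_eq_add_norm_sq_starProjection w (LinearMap.range (fderiv ℝ f p : E →ₗ[ℝ] F))]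
  ring

section Cylinder

variable {F : Type*} [NormedAddCommGroup F] [InnerProductSpace ℝ F]

theorem hasFDerivAt_cylinder {e γ' : F} {γ : ℝ → F} {p : ℝ × ℝ} (hγ : HasDerivAt γ γ' p.2) :
    HasFDerivAt (fun q : ℝ × ℝ => q.1 • e + γ q.2)
      ((ContinuousLinearMap.fst ℝ ℝ ℝ).smulRight e +
        (ContinuousLinearMap.snd ℝ ℝ ℝ).smulRight γ') p :=
  ((hasFDerivAt_fst.smul_const e).add (hγ.hasFDerivAt.comp p hasFDerivAt_snd)).congr_fderiv
    (by ext <;> simp)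

theorem starProjection_range_cylinderDeriv {e v w : F} (hev : ⟪e, v⟫ = 0) (hew : ⟪e, w⟫ = 0) :
    (LinearMap.range (((ContinuousLinearMap.fst ℝ ℝ ℝ).smulRight e +
      (ContinuousLinearMap.snd ℝ ℝ ℝ).smulRight v : ℝ × ℝ →L[ℝ] F) : ℝ × ℝ →ₗ[ℝ] F)).starProjection
        w = (⟪v, w⟫ / ‖v‖ ^ 2) • v := by
  apply Submodule.eq_starProjection_of_mem_of_inner_eq_zero
  · exact ⟨(0, ⟪v, w⟫ / ‖v‖ ^ 2), by simp⟩
  · rintro _ ⟨⟨a, b⟩, rfl⟩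
    have hwe : ⟪w, e⟫ = 0 := by rwa [real_inner_comm]
    rcases eq_or_ne v 0 with rfl | hv
    · simp [inner_smul_right, hwe]
    simp [inner_sub_left, inner_add_right, inner_smul_left, inner_smul_right, real_inner_comm,
      hev, hwe, hv]

theorem tangentialComponent_cylinder [FiniteDimensional ℝ F] {e γ' w : F} {γ : ℝ → F}
    {p : ℝ × ℝ} (hγ : HasDerivAt γ γ' p.2) (hev : ⟪e, γ'⟫ = 0) (hew : ⟪e, w⟫ = 0) :
    tangentialComponent (fun q : ℝ × ℝ => q.1 • e + γ q.2) p w = (⟪γ', w⟫ / ‖γ'‖ ^ 2) • γ' := by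
  rw [tangentialComponent, Submodule.coe_orthogonalProjectionOnto_apply]
  simp only [(hasFDerivAt_cylinder hγ).fderiv]
  exact starProjection_range_cylinderDeriv hev hew

end Cylinder

section LogSpiral

variable {F : Type*} [NormedAddCommGroup F] [InnerProductSpace ℝ F]

theorem norm_smul_add_smul_of_orthonormal {u v : F} (hu : ‖u‖ = 1) (hv : ‖v‖ = 1)
    (huv : ⟪u, v⟫ = 0) (a b : ℝ) : ‖a • u + b • v‖ = √(a ^ 2 + b ^ 2) := by
  rw [← sqrt_sq (norm_nonneg _), norm_add_sq_real, norm_smul, norm_smul, real_inner_smul_left,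
    real_inner_smul_right, huv, hu, hv]
  simp

noncomputable def logSpiral (u v : F) (A s : ℝ) : F :=
  exp (-s) • (cos (A * s) • u + sin (A * s) • v)

/-- The Killing field along `logSpiral`: the spiral point turned by a right angle in the plane
of `u` and `v`. -/
noncomputable def logSpiralRot (u v : F) (A s : ℝ) : F :=
  exp (-s) • (-sin (A * s) • u + cos (A * s) • v)

noncomputable def logSpiralCylinder (e u v : F) (A : ℝ) : ℝ × ℝ → F :=
  fun q => q.1 • e + logSpiral u v A q.2

theorem hasDerivAt_logSpiral (u v : F) (A s : ℝ) :
    HasDerivAt (logSpiral u v A) (-logSpiral u v A s + A • logSpiralRot u v A s) s := by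
  have hexp : HasDerivAt (fun s => exp (-s)) (-exp (-s)) s := by
    simpa using (hasDerivAt_neg s).exp
  have hcos : HasDerivAt (fun s => cos (A * s)) (-sin (A * s) * A) s := by
    simpa using ((hasDerivAt_id s).const_mul A).cos
  have hsin : HasDerivAt (fun s => sin (A * s)) (cos (A * s) * A) s := by
    simpa using ((hasDerivAt_id s).const_mul A).sin
  convert hexp.smul ((hcos.smul_const u).add (hsin.smul_const v)) using 1
  · rfl
  · simp only [logSpiral, logSpiralRot, Pi.add_apply]
    module

theorem norm_logSpiral {u v : F} (hu : ‖u‖ = 1) (hv : ‖v‖ = 1) (huv : ⟪u, v⟫ = 0) (A s : ℝ) :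
    ‖logSpiral u v A s‖ = exp (-s) := by
  rw [logSpiral, norm_smul, norm_smul_add_smul_of_orthonormal hu hv huv, cos_sq_add_sin_sq,
    sqrt_one, mul_one, norm_of_nonneg (exp_pos _).le]

theorem norm_logSpiralRot {u v : F} (hu : ‖u‖ = 1) (hv : ‖v‖ = 1) (huv : ⟪u, v⟫ = 0) (A s : ℝ) :
    ‖logSpiralRot u v A s‖ = exp (-s) := by
  rw [logSpiralRot, norm_smul, norm_smul_add_smul_of_orthonormal hu hv huv, neg_sq,
    sin_sq_add_cos_sq, sqrt_one, mul_one, norm_of_nonneg (exp_pos _).le]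

theorem inner_logSpiral_logSpiralRot {u v : F} (hu : ‖u‖ = 1) (hv : ‖v‖ = 1) (huv : ⟪u, v⟫ = 0)
    (A s : ℝ) : ⟪logSpiral u v A s, logSpiralRot u v A s⟫ = 0 := by
  simp only [logSpiral, logSpiralRot, real_inner_smul_left, real_inner_smul_right, inner_add_left,
    inner_add_right, real_inner_self_eq_norm_sq, hu, hv, huv, real_inner_comm u v]
  ring

theorem inner_logSpiral_of_orthogonal {e u v : F} (heu : ⟪e, u⟫ = 0) (hev : ⟪e, v⟫ = 0)
    (A s : ℝ) : ⟪e, logSpiral u v A s⟫ = 0 := by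
  simp [logSpiral, inner_add_right, inner_smul_right, heu, hev]

theorem inner_logSpiralRot_of_orthogonal {e u v : F} (heu : ⟪e, u⟫ = 0) (hev : ⟪e, v⟫ = 0)
    (A s : ℝ) : ⟪e, logSpiralRot u v A s⟫ = 0 := by
  simp [logSpiralRot, inner_add_right, inner_smul_right, heu, hev]

theorem norm_deriv_logSpiral {u v : F} (hu : ‖u‖ = 1) (hv : ‖v‖ = 1) (huv : ⟪u, v⟫ = 0)
    (A s : ℝ) : ‖-logSpiral u v A s + A • logSpiralRot u v A s‖ = exp (-s) * √(1 + A ^ 2) := by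
  rw [← pow_left_inj₀ (norm_nonneg _) (by positivity) two_ne_zero, norm_add_sq_real, norm_neg,
    norm_smul, inner_neg_left, real_inner_smul_right, inner_logSpiral_logSpiralRot hu hv huv,
    norm_logSpiral hu hv huv, norm_logSpiralRot hu hv huv, Real.norm_eq_abs, mul_pow, mul_pow,
    sq_abs, sq_sqrt (by positivity)]
  ring

theorem inner_deriv_logSpiral_logSpiralRot {u v : F} (hu : ‖u‖ = 1) (hv : ‖v‖ = 1)
    (huv : ⟪u, v⟫ = 0) (A s : ℝ) :
    ⟪-logSpiral u v A s + A • logSpiralRot u v A s, logSpiralRot u v A s⟫ = A * exp (-s) ^ 2 := by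
  rw [inner_add_left, inner_neg_left, real_inner_smul_left, inner_logSpiral_logSpiralRot hu hv huv,
    real_inner_self_eq_norm_sq, norm_logSpiralRot hu hv huv, neg_zero, zero_add]

theorem tangentialComponent_logSpiralCylinder [FiniteDimensional ℝ F] {e u v : F}
    (hu : ‖u‖ = 1) (hv : ‖v‖ = 1) (huv : ⟪u, v⟫ = 0) (heu : ⟪e, u⟫ = 0) (hev : ⟪e, v⟫ = 0)
    (A : ℝ) (p : ℝ × ℝ) :
    tangentialComponent (logSpiralCylinder e u v A) p (logSpiralRot u v A p.2) =
      (A / (1 + A ^ 2)) • (-logSpiral u v A p.2 + A • logSpiralRot u v A p.2) := by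
  have he : ⟪e, -logSpiral u v A p.2 + A • logSpiralRot u v A p.2⟫ = 0 := by
    rw [inner_add_right, inner_neg_right, inner_smul_right, inner_logSpiral_of_orthogonal heu hev,
      inner_logSpiralRot_of_orthogonal heu hev, neg_zero, mul_zero, add_zero]
  unfold logSpiralCylinder
  rw [tangentialComponent_cylinder (hasDerivAt_logSpiral u v A p.2) he
    (inner_logSpiralRot_of_orthogonal heu hev A p.2), inner_deriv_logSpiral_logSpiralRot hu hv huv,
    norm_deriv_logSpiral hu hv huv, mul_pow, sq_sqrt (by positivity)]
  congr 1
  field_simp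

theorem logSpiralCylinder_constantRatio [FiniteDimensional ℝ F] {e u v : F}
    (hu : ‖u‖ = 1) (hv : ‖v‖ = 1) (huv : ⟪u, v⟫ = 0) (heu : ⟪e, u⟫ = 0) (hev : ⟪e, v⟫ = 0)
    (A : ℝ) (p : ℝ × ℝ) :
    ‖logSpiralRot u v A p.2‖ = exp (-p.2) ∧
      ‖tangentialComponent (logSpiralCylinder e u v A) p (logSpiralRot u v A p.2)‖ =
        |A| / √(1 + A ^ 2) * ‖logSpiralRot u v A p.2‖ ∧
      ‖logSpiralRot u v A p.2 -
          tangentialComponent (logSpiralCylinder e u v A) p (logSpiralRot u v A p.2)‖ /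
        ‖tangentialComponent (logSpiralCylinder e u v A) p (logSpiralRot u v A p.2)‖ = 1 / |A| := by
  have hT₀ := tangentialComponent_logSpiralCylinder hu hv huv heu hev A p
  set w := logSpiralRot u v A p.2
  set T := tangentialComponent (logSpiralCylinder e u v A) p w
  have hw : ‖w‖ = exp (-p.2) := norm_logSpiralRot hu hv huv A p.2
  have hT : ‖T‖ = |A| / √(1 + A ^ 2) * exp (-p.2) := by
    rw [hT₀, norm_smul, norm_deriv_logSpiral hu hv huv, Real.norm_eq_abs, abs_div,
      abs_of_pos (by positivity : (0 : ℝ) < 1 + A ^ 2)]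
    field_simp
    rw [sq_sqrt (by positivity)]
  have hN : ‖w - T‖ = exp (-p.2) / √(1 + A ^ 2) := by
    rw [← pow_left_inj₀ (norm_nonneg _) (by positivity) two_ne_zero,
      norm_sub_tangentialComponent_sq, hw, hT, div_pow, mul_pow, div_pow, sq_abs,
      sq_sqrt (by positivity)]
    field_simp
    ring
  refine ⟨hw, hw ▸ hT, ?_⟩
  rw [hN, hT]
  -- at `A = 0` both sides vanish, by the convention `x / 0 = 0`
  field_simp

end LogSpiral

theorem stmt16_general (A : ℝ)
    (f : ℝ × ℝ → EuclideanSpace ℝ (Fin 3))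
    (hf : ∀ p : ℝ × ℝ, f p = (WithLp.equiv 2 (Fin 3 → ℝ)).symm
      ![p.1, Real.exp (-p.2) * Real.cos (A * p.2),
        Real.exp (-p.2) * Real.sin (A * p.2)])
    (K : EuclideanSpace ℝ (Fin 3) → EuclideanSpace ℝ (Fin 3))
    (hK : ∀ y : EuclideanSpace ℝ (Fin 3),
      K y = (WithLp.equiv 2 (Fin 3 → ℝ)).symm ![0, -(y 2), y 1]) :
    ∀ p : ℝ × ℝ,
      ‖K (f p)‖ = Real.exp (-p.2) ∧
      ‖tangentialComponent f p (K (f p))‖ =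
        |A| / Real.sqrt (1 + A ^ 2) * ‖K (f p)‖ ∧
      ‖K (f p) - tangentialComponent f p (K (f p))‖ /
        ‖tangentialComponent f p (K (f p))‖ = 1 / |A| := by
  intro p
  let e : Fin 3 → EuclideanSpace ℝ (Fin 3) := fun i => EuclideanSpace.single i 1
  have he : Orthonormal ℝ e := EuclideanSpace.orthonormal_single
  have hf' : f = logSpiralCylinder (e 0) (e 1) (e 2) A := by
    funext q
    ext i
    fin_cases i <;> simp [hf, e, logSpiralCylinder, logSpiral]
  have hK' : K (f p) = logSpiralRot (e 1) (e 2) A p.2 := by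
    ext i
    fin_cases i <;> simp [hK, hf, e, logSpiralRot]
  rw [hK', hf']
  exact logSpiralCylinder_constantRatio (he.norm_eq_one 1) (he.norm_eq_one 2)
    (he.inner_eq_zero (by decide)) (he.inner_eq_zero (by decide)) (he.inner_eq_zero (by decide)) A p

/-- The cylinder over a logarithmic spiral,
`f(t,s) = (t, e^{-s} cos(As), e^{-s} sin(As))`, `A ≠ 0`, has the constant ratio
property with respect to the rotational Killing field `K(x,y,z) = (0,-z,y)`:
`‖K(f(t,s))‖ = e^{-s}`, the tangential component of `K(f(t,s))` has norm
`(|A|/√(1+A²)) ‖K(f(t,s))‖`, and the ratio of the norms of the normal and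
tangential components is the constant `1/|A|`. -/
theorem stmt16 (A : ℝ) (hA : A ≠ 0)
    (f : ℝ × ℝ → EuclideanSpace ℝ (Fin 3))
    (hf : ∀ p : ℝ × ℝ, f p = (WithLp.equiv 2 (Fin 3 → ℝ)).symm
      ![p.1, Real.exp (-p.2) * Real.cos (A * p.2),
        Real.exp (-p.2) * Real.sin (A * p.2)])
    (K : EuclideanSpace ℝ (Fin 3) → EuclideanSpace ℝ (Fin 3))
    (hK : ∀ y : EuclideanSpace ℝ (Fin 3),
      K y = (WithLp.equiv 2 (Fin 3 → ℝ)).symm ![0, -(y 2), y 1]) :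
    ∀ p : ℝ × ℝ,
      ‖K (f p)‖ = Real.exp (-p.2) ∧
      ‖tangentialComponent f p (K (f p))‖ =
        |A| / Real.sqrt (1 + A ^ 2) * ‖K (f p)‖ ∧
      ‖K (f p) - tangentialComponent f p (K (f p))‖ /
        ‖tangentialComponent f p (K (f p))‖ = 1 / |A| :=
  stmt16_general A f hf K hK
end

section
/- Let σ ∈ (0, π/2), let U = {(t,s) ∈ ℝ² : t ≠ s · Real.sin σ}, set ρ(t,s) = (t − s · Real.sin σ) / Real.cos σ, and define Dini's helicoidal surface f : U → ℝ³ by f(t,s) = ((Real.cos σ · Real.cos s) / Real.cosh (ρ(t,s)), (Real.cos σ · Real.sin s) / Real.cosh (ρ(t,s)), t − Real.cos σ · Real.tanh (ρ(t,s))). Let K : ℝ³ → ℝ³ be the Killing vector field K(x,y,z) = (−y, x, 0) generating rotations about the z-axis. Then there is a constant c ≥ 0 such that for every (t,s) ∈ U the normal component of K(f(t,s)) at (t,s) (that is, K(f(t,s)) minus its orthogonal projection onto the range of fderiv ℝ f (t,s)) has norm c · ‖K(f(t,s))‖. In other words, Dini's surface makes a constant angle with K, i.e. it has the constant ratio property with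 respect to the Killing vector field K. -/
open RealInnerProductSpace

lemma inner3 (a b : Fin 3 → ℝ) :
    ⟪((WithLp.equiv 2 (Fin 3 → ℝ)).symm a : EuclideanSpace ℝ (Fin 3)),
      ((WithLp.equiv 2 (Fin 3 → ℝ)).symm b : EuclideanSpace ℝ (Fin 3))⟫ =
      a 0 * b 0 + a 1 * b 1 + a 2 * b 2 := by
  simp [PiLp.inner_apply, Fin.sum_univ_three]
  ring

set_option maxHeartbeats 2000000 in
/-- Dini's helicoidal surface
`f(t,s) = (cos σ cos s / cosh ρ, cos σ sin s / cosh ρ, t - cos σ tanh ρ)`,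
with `ρ = (t - s sin σ)/cos σ` and `σ ∈ (0, π/2)`, makes a constant angle with the
rotational Killing field `K(x,y,z) = (-y, x, 0)`: there is a constant `c ≥ 0` such
that at every point the normal component of `K ∘ f` has norm `c · ‖K(f(t,s))‖`. -/
theorem stmt17 (σ : ℝ) (hσ : σ ∈ Set.Ioo 0 (Real.pi / 2))
    (U : Set (ℝ × ℝ)) (hU : U = {p : ℝ × ℝ | p.1 ≠ p.2 * Real.sin σ})
    (ρ : ℝ × ℝ → ℝ) (hρ : ∀ p : ℝ × ℝ, ρ p = (p.1 - p.2 * Real.sin σ) / Real.cos σ)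
    (f : ℝ × ℝ → EuclideanSpace ℝ (Fin 3))
    (hf : ∀ p : ℝ × ℝ, f p = (WithLp.equiv 2 (Fin 3 → ℝ)).symm
      ![Real.cos σ * Real.cos p.2 / Real.cosh (ρ p),
        Real.cos σ * Real.sin p.2 / Real.cosh (ρ p),
        p.1 - Real.cos σ * Real.tanh (ρ p)])
    (K : EuclideanSpace ℝ (Fin 3) → EuclideanSpace ℝ (Fin 3))
    (hK : ∀ y : EuclideanSpace ℝ (Fin 3),
      K y = (WithLp.equiv 2 (Fin 3 → ℝ)).symm ![-(y 1), y 0, 0]) :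
    ∃ c : ℝ, 0 ≤ c ∧ ∀ p ∈ U,
      ‖K (f p) - tangentialComponent f p (K (f p))‖ = c * ‖K (f p)‖ := by
  obtain ⟨hσ0, hσπ⟩ := hσ
  have hπ := Real.pi_pos
  have hcσ : 0 < Real.cos σ := Real.cos_pos_of_mem_Ioo ⟨by linarith, hσπ⟩
  have hsσ : 0 < Real.sin σ := Real.sin_pos_of_pos_of_lt_pi hσ0 (by linarith)
  have hpy : Real.sin σ ^ 2 + Real.cos σ ^ 2 = 1 := Real.sin_sq_add_cos_sq σ
  subst hU
  have hρ' : ρ = fun p : ℝ × ℝ => (p.1 - p.2 * Real.sin σ) / Real.cos σ := funext hρ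
  subst hρ'
  have hfeq : f = fun q : ℝ × ℝ => (WithLp.equiv 2 (Fin 3 → ℝ)).symm
      ![Real.cos σ * Real.cos q.2 / Real.cosh ((q.1 - q.2 * Real.sin σ) / Real.cos σ),
        Real.cos σ * Real.sin q.2 / Real.cosh ((q.1 - q.2 * Real.sin σ) / Real.cos σ),
        q.1 - Real.cos σ * Real.tanh ((q.1 - q.2 * Real.sin σ) / Real.cos σ)] := funext hf
  refine ⟨Real.sin σ, hsσ.le, ?_⟩
  intro p hp
  set r : ℝ := (p.1 - p.2 * Real.sin σ) / Real.cos σ with hr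
  have hrne : r ≠ 0 := by
    rw [hr]
    exact div_ne_zero (sub_ne_zero.2 hp) hcσ.ne'
  set ch := Real.cosh r with hch
  set sh := Real.sinh r with hsh
  have hch0 : 0 < ch := Real.cosh_pos r
  have hsq : ch ^ 2 = sh ^ 2 + 1 := Real.cosh_sq r
  have hshne : sh ≠ 0 := by rw [hsh]; exact Real.sinh_ne_zero.2 hrne
  have htanh : Real.tanh r = sh / ch := Real.tanh_eq_sinh_div_cosh r
  have hpy2 : Real.sin p.2 ^ 2 + Real.cos p.2 ^ 2 = 1 := Real.sin_sq_add_cos_sq p.2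
  -- tangent vectors and the candidate derivative
  set ft : EuclideanSpace ℝ (Fin 3) := (WithLp.equiv 2 (Fin 3 → ℝ)).symm
    ![-(Real.cos p.2 * sh) / ch ^ 2, -(Real.sin p.2 * sh) / ch ^ 2, sh ^ 2 / ch ^ 2] with hftdef
  set fs : EuclideanSpace ℝ (Fin 3) := (WithLp.equiv 2 (Fin 3 → ℝ)).symm
    ![(Real.sin σ * Real.cos p.2 * sh - Real.cos σ * Real.sin p.2 * ch) / ch ^ 2,
      (Real.cos σ * Real.cos p.2 * ch + Real.sin σ * Real.sin p.2 * sh) / ch ^ 2,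
      Real.sin σ / ch ^ 2] with hfsdef
  set D : (ℝ × ℝ) →L[ℝ] EuclideanSpace ℝ (Fin 3) :=
    (ContinuousLinearMap.fst ℝ ℝ ℝ).smulRight ft
      + (ContinuousLinearMap.snd ℝ ℝ ℝ).smulRight fs with hDdef
  -- derivative of ρ
  have hρd : HasFDerivAt (fun x : ℝ × ℝ => (x.1 - x.2 * Real.sin σ) / Real.cos σ)
      ((Real.cos σ)⁻¹ • (ContinuousLinearMap.fst ℝ ℝ ℝ
        - Real.sin σ • ContinuousLinearMap.snd ℝ ℝ ℝ)) p := by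
    refine HasFDerivAt.congr_fderiv
      ((hasFDerivAt_fst.sub (hasFDerivAt_snd.mul_const (Real.sin σ))).mul_const
        (Real.cos σ)⁻¹) ?_
    ext <;> simp <;> ring
  have htanhd : HasDerivAt Real.tanh (1 / ch ^ 2) r := by
    have h := (Real.hasDerivAt_sinh r).div (Real.hasDerivAt_cosh r) (Real.cosh_pos r).ne'
    rw [show Real.tanh = Real.sinh / Real.cosh from
      funext fun x => Real.tanh_eq_sinh_div_cosh x]
    refine HasDerivAt.congr_deriv h ?_
    rw [← hch, ← hsh]
    field_simp
    nlinarith [hsq]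
  have hinvcosh : HasFDerivAt
      (fun x : ℝ × ℝ => (Real.cosh ((x.1 - x.2 * Real.sin σ) / Real.cos σ))⁻¹)
      ((-sh / ch ^ 2) • ((Real.cos σ)⁻¹ • (ContinuousLinearMap.fst ℝ ℝ ℝ
        - Real.sin σ • ContinuousLinearMap.snd ℝ ℝ ℝ))) p :=
    by have := (((Real.hasDerivAt_cosh r).inv (Real.cosh_pos r).ne').comp_hasFDerivAt p hρd); exact this
  have hDlam : HasFDerivAt (fun q : ℝ × ℝ => (WithLp.equiv 2 (Fin 3 → ℝ)).symm
      ![Real.cos σ * Real.cos q.2 / Real.cosh ((q.1 - q.2 * Real.sin σ) / Real.cos σ),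
        Real.cos σ * Real.sin q.2 / Real.cosh ((q.1 - q.2 * Real.sin σ) / Real.cos σ),
        q.1 - Real.cos σ * Real.tanh ((q.1 - q.2 * Real.sin σ) / Real.cos σ)]
      : ℝ × ℝ → EuclideanSpace ℝ (Fin 3)) D p := by
    rw [← hasFDerivWithinAt_univ]
    refine (hasFDerivWithinAt_piLp 2).2 ?_
    intro i
    refine HasFDerivAt.hasFDerivWithinAt ?_
    fin_cases i
    · refine HasFDerivAt.congr_fderiv
        ((((Real.hasDerivAt_cos p.2).comp_hasFDerivAt p hasFDerivAt_snd).const_mul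
          (Real.cos σ)).mul hinvcosh) ?_
      ext <;> simp [hDdef, hftdef, hfsdef, PiLp.toLp_apply, ← hr] <;>
        (try field_simp) <;> ring
    · refine HasFDerivAt.congr_fderiv
        ((((Real.hasDerivAt_sin p.2).comp_hasFDerivAt p hasFDerivAt_snd).const_mul
          (Real.cos σ)).mul hinvcosh) ?_
      ext <;> simp [hDdef, hftdef, hfsdef, PiLp.toLp_apply, ← hr] <;>
        (try field_simp) <;> ring
    · refine HasFDerivAt.congr_fderiv
        (hasFDerivAt_fst.sub ((by have := (htanhd.comp_hasFDerivAt p hρd).const_mul (Real.cos σ); exact this))) ?_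
      ext
      · simp [hDdef, hftdef, hfsdef, PiLp.toLp_apply]
        field_simp
        linear_combination hsq
      · simp [hDdef, hftdef, hfsdef, PiLp.toLp_apply]
        try field_simp
        try ring
  have hD : HasFDerivAt f D p := by rw [hfeq]; exact hDlam
  -- the Killing field along f
  set Kf : EuclideanSpace ℝ (Fin 3) := (WithLp.equiv 2 (Fin 3 → ℝ)).symm
    ![-(Real.cos σ * Real.sin p.2 / ch), Real.cos σ * Real.cos p.2 / ch, 0] with hKfdef
  have hKf : K (f p) = Kf := by
    rw [hK, hf, hKfdef]
    congr 1
  -- inner products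
  have Ikft : ⟪Kf, ft⟫ = 0 := by
    rw [hKfdef, hftdef, inner3]
    simp
    ring
  have Ifsft : ⟪fs, ft⟫ = 0 := by
    rw [hfsdef, hftdef, inner3]
    simp
    field_simp
    linear_combination (-(Real.sin σ * sh ^ 2)) * hpy2
  have Ikfs : ⟪Kf, fs⟫ = Real.cos σ ^ 2 / ch ^ 2 := by
    rw [hKfdef, hfsdef, inner3]
    simp
    field_simp
    linear_combination (Real.cos σ * ch) * hpy2
  have Ifsfs : ⟪fs, fs⟫ = 1 / ch ^ 2 := by
    rw [hfsdef, inner3]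
    simp
    field_simp
    linear_combination (Real.sin σ ^ 2 * sh ^ 2 + Real.cos σ ^ 2 * ch ^ 2) * hpy2
      + ch ^ 2 * hpy - Real.sin σ ^ 2 * hsq
  have Ikk : ⟪Kf, Kf⟫ = Real.cos σ ^ 2 / ch ^ 2 := by
    rw [hKfdef, inner3]
    simp
    field_simp
    linear_combination hpy2
  -- the orthogonal projection of Kf on the tangent space
  have hproj : (Submodule.orthogonalProjectionOnto (LinearMap.range (fderiv ℝ f p : (ℝ × ℝ) →ₗ[ℝ] EuclideanSpace ℝ (Fin 3))) Kf
      : EuclideanSpace ℝ (Fin 3)) = Real.cos σ ^ 2 • fs := by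
    rw [← Submodule.starProjection_apply]
    apply Submodule.eq_starProjection_of_mem_of_inner_eq_zero
    · rw [hD.fderiv]
      refine ⟨(0, Real.cos σ ^ 2), ?_⟩
      simp [hDdef]
    · intro x hx
      rw [hD.fderiv] at hx
      obtain ⟨y, rfl⟩ := hx
      have hDy : D y = y.1 • ft + y.2 • fs := by simp [hDdef]
      rw [ContinuousLinearMap.coe_coe, hDy]
      simp only [inner_sub_left, inner_add_right, real_inner_smul_left,
        real_inner_smul_right]
      rw [Ikft, Ifsft, Ikfs, Ifsfs]
      ring
  -- final computation
  rw [hKf]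
  simp only [tangentialComponent]
  rw [hproj]
  have hdd : ⟪Kf - Real.cos σ ^ 2 • fs, Kf - Real.cos σ ^ 2 • fs⟫
      = (Real.sin σ * Real.cos σ / ch) ^ 2 := by
    have Ifsk : ⟪fs, Kf⟫ = Real.cos σ ^ 2 / ch ^ 2 := by
      rw [real_inner_comm]; exact Ikfs
    simp only [inner_sub_left, inner_sub_right, real_inner_smul_left,
      real_inner_smul_right, Ikk, Ikfs, Ifsk, Ifsfs]
    field_simp
    first
      | linear_combination (-(Real.cos σ ^ 2)) * hpy
      | linear_combination (Real.cos σ ^ 2) * hpy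
      | linear_combination (-(Real.cos σ ^ 2 * ch ^ 2)) * hpy
      | linear_combination (Real.cos σ ^ 2 * ch ^ 2) * hpy
      | linear_combination (-1 : ℝ) * hpy
      | ring
  have hkk' : ⟪Kf, Kf⟫ = (Real.cos σ / ch) ^ 2 := by rw [Ikk]; ring
  rw [norm_eq_sqrt_real_inner, norm_eq_sqrt_real_inner, hdd, hkk',
    Real.sqrt_sq (by positivity), Real.sqrt_sq (by positivity)]
  ring
end

section
/- Let n ≥ 3, let V ⊆ ℝ^{n−2} be open, let J ⊆ ℝ be open, and let φ₀ : V → EuclideanSpace ℝ (Fin n) and N : V → EuclideanSpace ℝ (Fin n) be smooth with: ‖φ₀(x)‖ = 1, ‖N(x)‖ = 1, ⟨N(x), φ₀(x)⟩ = 0, ⟨N(x), fderiv ℝ φ₀ x v⟩ = 0 for all x ∈ V and v ∈ ℝ^{n−2}, and fderiv ℝ φ₀ x injective for all x ∈ V. Let a : J → ℝ be smooth and define f : V × J → EuclideanSpace ℝ (Fin n) by f(x,s) = Real.exp (a s) • ((Real.cos s) • φ₀(x) + (Real.sin s) • N(x)). Then for every p = (x,s) ∈ V × J: (a) ⟨f(p),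 ∂f/∂x_i(p)⟩ = 0 and ⟨∂f/∂s(p), ∂f/∂x_i(p)⟩ = 0 for all 1 ≤ i ≤ n−2, so the tangential component of the position vector f(p) is a multiple of ∂f/∂s(p); and (b) if fderiv ℝ f p is injective, then for each i the mixed second partial derivative ∂²f/∂x_i∂s(p) lies in the range of fderiv ℝ f p, i.e. its normal component vanishes. Consequently the second fundamental form of f satisfies α(X, R^T_f) = 0 for every X orthogonal to R^T_f, so f has the principal direction property with respect to the radial vector field R(y) = y. -/
open RealInnerProductSpace

set_option maxHeartbeats 1000000

/-- For `f(x,s) = e^{a(s)} • ((cos s) • φ₀(x) + (sin s) • N(x))`, where `φ₀` is a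
hypersurface of the unit sphere `S^{n-1}` with unit normal `N`: (a) the position
vector `f(p)` and `∂f/∂s(p)` are orthogonal to each `∂f/∂x_i(p)`, so the tangential
component of the position vector is a multiple of `∂f/∂s(p)`; (b) if `fderiv ℝ f p`
is injective, each mixed second partial `∂²f/∂x_i∂s(p)` lies in the tangent space —
so `f` has the principal direction property with respect to the radial field. -/
theorem stmt19 (n : ℕ) (hn : 3 ≤ n)
    (V : Set (EuclideanSpace ℝ (Fin (n - 2)))) (hV : IsOpen V)
    (J : Set ℝ) (hJ : IsOpen J)
    (φ₀ N : EuclideanSpace ℝ (Fin (n - 2)) → EuclideanSpace ℝ (Fin n))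
    (hφ₀ : ContDiffOn ℝ (⊤ : ℕ∞) φ₀ V) (hNsmooth : ContDiffOn ℝ (⊤ : ℕ∞) N V)
    (hφ₀unit : ∀ x ∈ V, ‖φ₀ x‖ = 1) (hNunit : ∀ x ∈ V, ‖N x‖ = 1)
    (hNorth : ∀ x ∈ V, ⟪N x, φ₀ x⟫ = 0)
    (hNnormal : ∀ x ∈ V, ∀ v : EuclideanSpace ℝ (Fin (n - 2)),
      ⟪N x, fderiv ℝ φ₀ x v⟫ = 0)
    (hφ₀imm : ∀ x ∈ V, Function.Injective (fderiv ℝ φ₀ x))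
    (a : ℝ → ℝ) (ha : ContDiffOn ℝ (⊤ : ℕ∞) a J)
    (f : EuclideanSpace ℝ (Fin (n - 2)) × ℝ → EuclideanSpace ℝ (Fin n))
    (hf : ∀ p : EuclideanSpace ℝ (Fin (n - 2)) × ℝ,
      f p = Real.exp (a p.2) • (Real.cos p.2 • φ₀ p.1 + Real.sin p.2 • N p.1)) :
    ∀ x ∈ V, ∀ s ∈ J,
      (∀ i : Fin (n - 2),
        ⟪f (x, s), fderiv ℝ f (x, s) (EuclideanSpace.single i 1, 0)⟫ = 0 ∧
        ⟪fderiv ℝ f (x, s) (0, 1),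
          fderiv ℝ f (x, s) (EuclideanSpace.single i 1, 0)⟫ = 0) ∧
      (∃ c : ℝ, tangentialComponent f (x, s) (f (x, s)) =
        c • fderiv ℝ f (x, s) (0, 1)) ∧
      (Function.Injective (fderiv ℝ f (x, s)) →
        ∀ i : Fin (n - 2),
          fderiv ℝ (fun q => fderiv ℝ f q (EuclideanSpace.single i 1, 0)) (x, s)
              (0, 1) ∈
            LinearMap.range (fderiv ℝ f (x, s) :
              EuclideanSpace ℝ (Fin (n - 2)) × ℝ →ₗ[ℝ] EuclideanSpace ℝ (Fin n))) := by
  have hφd : ∀ x ∈ V, HasFDerivAt φ₀ (fderiv ℝ φ₀ x) x := fun x hx =>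
    ((hφ₀.differentiableOn (by simp)).differentiableAt (hV.mem_nhds hx)).hasFDerivAt
  have hNd : ∀ x ∈ V, HasFDerivAt N (fderiv ℝ N x) x := fun x hx =>
    ((hNsmooth.differentiableOn (by simp)).differentiableAt (hV.mem_nhds hx)).hasFDerivAt
  have had : ∀ s ∈ J, HasDerivAt a (deriv a s) s := fun s hs =>
    ((ha.differentiableOn (by simp)).differentiableAt (hJ.mem_nhds hs)).hasDerivAt
  -- generic differentiation of inner products that are locally constant
  have key : ∀ (u w : EuclideanSpace ℝ (Fin (n - 2)) → EuclideanSpace ℝ (Fin n)),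
      ∀ x ∈ V, HasFDerivAt u (fderiv ℝ u x) x → HasFDerivAt w (fderiv ℝ w x) x →
      (∀ y ∈ V, ⟪u y, w y⟫ = ⟪u x, w x⟫) →
      ∀ v, ⟪u x, fderiv ℝ w x v⟫ + ⟪fderiv ℝ u x v, w x⟫ = 0 := by
    intro u w x hx hu hw hconst v
    have h1 := hu.inner ℝ hw
    have h2 : HasFDerivAt (fun y => ⟪u y, w y⟫)
        (0 : EuclideanSpace ℝ (Fin (n - 2)) →L[ℝ] ℝ) x := by
      refine (hasFDerivAt_const (⟪u x, w x⟫) x).congr_of_eventuallyEq ?_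
      filter_upwards [hV.mem_nhds hx] with y hy using hconst y hy
    have h3 := h1.unique h2
    have h4 := congrFun (congrArg DFunLike.coe h3) v
    simpa [fderivInnerCLM_apply] using h4
  have O1 : ∀ x ∈ V, ∀ v, ⟪φ₀ x, fderiv ℝ φ₀ x v⟫ = 0 := by
    intro x hx v
    have := key φ₀ φ₀ x hx (hφd x hx) (hφd x hx)
      (fun y hy => by
        rw [real_inner_self_eq_norm_sq, real_inner_self_eq_norm_sq,
          hφ₀unit y hy, hφ₀unit x hx]) v
    have hc : ⟪fderiv ℝ φ₀ x v, φ₀ x⟫ = ⟪φ₀ x, fderiv ℝ φ₀ x v⟫ := real_inner_comm _ _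
    linarith
  have O2 : ∀ x ∈ V, ∀ v, ⟪N x, fderiv ℝ N x v⟫ = 0 := by
    intro x hx v
    have := key N N x hx (hNd x hx) (hNd x hx)
      (fun y hy => by
        rw [real_inner_self_eq_norm_sq, real_inner_self_eq_norm_sq,
          hNunit y hy, hNunit x hx]) v
    have hc : ⟪fderiv ℝ N x v, N x⟫ = ⟪N x, fderiv ℝ N x v⟫ := real_inner_comm _ _
    linarith
  have O4 : ∀ x ∈ V, ∀ v, ⟪φ₀ x, fderiv ℝ N x v⟫ = 0 := by
    intro x hx v
    have := key N φ₀ x hx (hNd x hx) (hφd x hx)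
      (fun y hy => by rw [hNorth y hy, hNorth x hx]) v
    have h5 := hNnormal x hx v
    have hc : ⟪fderiv ℝ N x v, φ₀ x⟫ = ⟪φ₀ x, fderiv ℝ N x v⟫ := real_inner_comm _ _
    linarith
  -- the first derivative of f
  have hDF : ∀ x ∈ V, ∀ s ∈ J, HasFDerivAt f
      ((Real.exp (a s) • (((ContinuousLinearMap.smulRight (1 : ℝ →L[ℝ] ℝ) (-Real.sin s)).comp
          (ContinuousLinearMap.snd ℝ (EuclideanSpace ℝ (Fin (n - 2))) ℝ)).smulRight (φ₀ x)
        + Real.cos s • ((fderiv ℝ φ₀ x).comp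
            (ContinuousLinearMap.fst ℝ (EuclideanSpace ℝ (Fin (n - 2))) ℝ))
        + ((ContinuousLinearMap.smulRight (1 : ℝ →L[ℝ] ℝ) (Real.cos s)).comp
          (ContinuousLinearMap.snd ℝ (EuclideanSpace ℝ (Fin (n - 2))) ℝ)).smulRight (N x)
        + Real.sin s • ((fderiv ℝ N x).comp
            (ContinuousLinearMap.fst ℝ (EuclideanSpace ℝ (Fin (n - 2))) ℝ)))
       + ((ContinuousLinearMap.smulRight (1 : ℝ →L[ℝ] ℝ) (Real.exp (a s) * deriv a s)).comp
          (ContinuousLinearMap.snd ℝ (EuclideanSpace ℝ (Fin (n - 2))) ℝ)).smulRight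
          (Real.cos s • φ₀ x + Real.sin s • N x))) (x, s) := by
    intro x hx s hs
    have hc : HasFDerivAt (fun p : EuclideanSpace ℝ (Fin (n - 2)) × ℝ => Real.exp (a p.2))
        ((ContinuousLinearMap.smulRight (1 : ℝ →L[ℝ] ℝ) (Real.exp (a s) * deriv a s)).comp
          (ContinuousLinearMap.snd ℝ (EuclideanSpace ℝ (Fin (n - 2))) ℝ)) (x, s) :=
      by have h := ((had s hs).exp.hasFDerivAt).comp (x, s)
          (hasFDerivAt_snd (𝕜 := ℝ) (E := EuclideanSpace ℝ (Fin (n - 2))) (F := ℝ) (p := (x, s))); exact h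
    have hcos : HasFDerivAt (fun p : EuclideanSpace ℝ (Fin (n - 2)) × ℝ => Real.cos p.2)
        ((ContinuousLinearMap.smulRight (1 : ℝ →L[ℝ] ℝ) (-Real.sin s)).comp
          (ContinuousLinearMap.snd ℝ (EuclideanSpace ℝ (Fin (n - 2))) ℝ)) (x, s) :=
      by have h := ((Real.hasDerivAt_cos s).hasFDerivAt).comp (x, s)
          (hasFDerivAt_snd (𝕜 := ℝ) (E := EuclideanSpace ℝ (Fin (n - 2))) (F := ℝ) (p := (x, s))); exact h
    have hsin : HasFDerivAt (fun p : EuclideanSpace ℝ (Fin (n - 2)) × ℝ => Real.sin p.2)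
        ((ContinuousLinearMap.smulRight (1 : ℝ →L[ℝ] ℝ) (Real.cos s)).comp
          (ContinuousLinearMap.snd ℝ (EuclideanSpace ℝ (Fin (n - 2))) ℝ)) (x, s) :=
      by have h := ((Real.hasDerivAt_sin s).hasFDerivAt).comp (x, s)
          (hasFDerivAt_snd (𝕜 := ℝ) (E := EuclideanSpace ℝ (Fin (n - 2))) (F := ℝ) (p := (x, s))); exact h
    have hφc : HasFDerivAt (fun p : EuclideanSpace ℝ (Fin (n - 2)) × ℝ => φ₀ p.1)
        ((fderiv ℝ φ₀ x).comp (ContinuousLinearMap.fst ℝ (EuclideanSpace ℝ (Fin (n - 2))) ℝ))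
        (x, s) := (hφd x hx).comp (x, s) hasFDerivAt_fst
    have hNc : HasFDerivAt (fun p : EuclideanSpace ℝ (Fin (n - 2)) × ℝ => N p.1)
        ((fderiv ℝ N x).comp (ContinuousLinearMap.fst ℝ (EuclideanSpace ℝ (Fin (n - 2))) ℝ))
        (x, s) := (hNd x hx).comp (x, s) hasFDerivAt_fst
    have hG := (hcos.smul hφc).add (hsin.smul hNc)
    have hF := hc.smul hG
    refine (hF.congr_of_eventuallyEq (Filter.Eventually.of_forall hf)).congr_fderiv ?_
    refine ContinuousLinearMap.ext fun p => ?_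
    obtain ⟨v, t⟩ := p
    simp only [ContinuousLinearMap.add_apply, ContinuousLinearMap.smul_apply,
      ContinuousLinearMap.comp_apply, ContinuousLinearMap.smulRight_apply,
      ContinuousLinearMap.coe_fst', ContinuousLinearMap.coe_snd',
      ContinuousLinearMap.one_apply, ContinuousLinearMap.coe_comp']
    simp only [Pi.add_apply, Pi.smul_apply']
    module
  have hDfval : ∀ x ∈ V, ∀ s ∈ J, ∀ (v : EuclideanSpace ℝ (Fin (n - 2))) (t : ℝ),
      fderiv ℝ f (x, s) (v, t) =
        Real.exp (a s) • (Real.cos s • fderiv ℝ φ₀ x v + Real.sin s • fderiv ℝ N x v)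
        + (t * (Real.exp (a s) * deriv a s)) • (Real.cos s • φ₀ x + Real.sin s • N x)
        + (t * Real.exp (a s)) • (Real.cos s • N x - Real.sin s • φ₀ x) := by
    intro x hx s hs v t
    rw [(hDF x hx s hs).fderiv]
    simp only [ContinuousLinearMap.add_apply, ContinuousLinearMap.smul_apply,
      ContinuousLinearMap.comp_apply, ContinuousLinearMap.smulRight_apply,
      ContinuousLinearMap.coe_fst', ContinuousLinearMap.coe_snd',
      ContinuousLinearMap.one_apply, ContinuousLinearMap.coe_comp', smul_eq_mul]
    module
  -- orthogonality of the position vector and ∂f/∂s to the x-derivatives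
  have hperp1 : ∀ x ∈ V, ∀ s ∈ J, ∀ v,
      ⟪f (x, s), fderiv ℝ f (x, s) (v, 0)⟫ = 0 := by
    intro x hx s hs v
    rw [hf (x, s), hDfval x hx s hs v 0]
    simp only [zero_mul, zero_smul, add_zero, zero_add, inner_add_left, inner_add_right,
      inner_sub_left, inner_sub_right, real_inner_smul_left, real_inner_smul_right,
      O1 x hx v, O2 x hx v, O4 x hx v, hNnormal x hx v, real_inner_comm (N x) (φ₀ x),
      hNorth x hx, mul_zero, sub_zero]
  have hperp2 : ∀ x ∈ V, ∀ s ∈ J, ∀ v,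
      ⟪fderiv ℝ f (x, s) (0, 1), fderiv ℝ f (x, s) (v, 0)⟫ = 0 := by
    intro x hx s hs v
    rw [hDfval x hx s hs v 0, hDfval x hx s hs 0 1]
    simp only [map_zero, smul_zero, zero_add, add_zero, zero_mul, zero_smul, one_mul,
      inner_add_left, inner_add_right, inner_sub_left, inner_sub_right,
      real_inner_smul_left, real_inner_smul_right,
      O1 x hx v, O2 x hx v, O4 x hx v, hNnormal x hx v, mul_zero, sub_zero]
  intro x hx s hs
  refine ⟨fun i => ⟨hperp1 x hx s hs _, hperp2 x hx s hs _⟩, ?_, ?_⟩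
  · -- part (a2): the tangential component of the position vector
    refine ⟨⟪f (x, s), fderiv ℝ f (x, s) (0, 1)⟫ /
      ⟪fderiv ℝ f (x, s) (0, 1), fderiv ℝ f (x, s) (0, 1)⟫, ?_⟩
    set Ds := fderiv ℝ f (x, s) (0, 1) with hDsdef
    set c : ℝ := ⟪f (x, s), Ds⟫ / ⟪Ds, Ds⟫ with hcdef
    have hcDs : c * ⟪Ds, Ds⟫ = ⟪f (x, s), Ds⟫ := by
      by_cases h : Ds = 0
      · simp [h]
      · rw [hcdef]; exact div_mul_cancel₀ _ (inner_self_ne_zero.mpr h)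
    show (Submodule.orthogonalProjectionOnto (LinearMap.range (fderiv ℝ f (x, s) :
        EuclideanSpace ℝ (Fin (n - 2)) × ℝ →ₗ[ℝ] EuclideanSpace ℝ (Fin n))) (f (x, s)) :
      EuclideanSpace ℝ (Fin n)) = c • Ds
    rw [← Submodule.starProjection_apply]
    refine Submodule.eq_starProjection_of_mem_of_inner_eq_zero ?_ ?_
    · exact Submodule.smul_mem _ _ (LinearMap.mem_range.mpr ⟨(0, 1), rfl⟩)
    · rintro w hw
      obtain ⟨⟨v, t⟩, rfl⟩ := hw
      simp only [ContinuousLinearMap.coe_coe]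
      have hsplit : fderiv ℝ f (x, s) (v, t) = fderiv ℝ f (x, s) (v, 0) + t • Ds := by
        have hvt : (v, t) = (v, (0 : ℝ)) +
            t • ((0 : EuclideanSpace ℝ (Fin (n - 2))), (1 : ℝ)) := by
          simp [Prod.ext_iff]
        rw [hvt, map_add, map_smul, hDsdef]
      rw [hsplit]
      simp only [inner_sub_left, inner_add_right, real_inner_smul_left,
        real_inner_smul_right, hperp1 x hx s hs v, hperp2 x hx s hs v]
      have h2 : ⟪Ds, fderiv ℝ f (x, s) (v, 0)⟫ = 0 := hperp2 x hx s hs v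
      linear_combination (-t) * hcDs + (t * ⟪Ds, Ds⟫) * hcdef - (⟪f (x, s), Ds⟫ * ⟪Ds, Ds⟫⁻¹) * h2
  · -- part (b): mixed second partials lie in the tangent space
    intro hinj i
    set e : EuclideanSpace ℝ (Fin (n - 2)) := EuclideanSpace.single i 1 with hedef
    -- the span of φ₀ x and N x and its orthogonal complement
    set K : Submodule ℝ (EuclideanSpace ℝ (Fin n)) := Submodule.span ℝ {φ₀ x, N x}
      with hKdef
    have horth : Orthonormal ℝ ![φ₀ x, N x] := by
      rw [orthonormal_iff_ite]
      intro i' j'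
      have A1 : ⟪φ₀ x, φ₀ x⟫ = 1 := by
        rw [real_inner_self_eq_norm_sq, hφ₀unit x hx]; norm_num
      have A2 : ⟪N x, N x⟫ = 1 := by
        rw [real_inner_self_eq_norm_sq, hNunit x hx]; norm_num
      have A3 : ⟪φ₀ x, N x⟫ = 0 := by rw [real_inner_comm]; exact hNorth x hx
      fin_cases i' <;> fin_cases j' <;>
        simp only [Matrix.cons_val_zero, Matrix.cons_val_one, Matrix.head_cons,
          Fin.zero_eta, Fin.mk_one, A1, A2, A3, hNorth x hx] <;> norm_num
    have hK2 : Module.finrank ℝ K = 2 := by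
      have h := finrank_span_eq_card horth.linearIndependent
      have hr : Set.range ![φ₀ x, N x] = {φ₀ x, N x} := by
        simp only [Matrix.range_cons, Matrix.range_empty, Set.union_empty,
          Set.union_singleton]
        exact Set.pair_comm _ _
      rw [hr] at h
      simpa using h
    have hKorth : Module.finrank ℝ Kᗮ = n - 2 := by
      have h := Submodule.finrank_add_finrank_orthogonal K
      rw [hK2, finrank_euclideanSpace_fin] at h
      omega
    -- the range of dφ₀ equals Kᗮ
    set RP : Submodule ℝ (EuclideanSpace ℝ (Fin n)) :=
      LinearMap.range ((fderiv ℝ φ₀ x).toLinearMap) with hRPdef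
    have hRPrank : Module.finrank ℝ RP = n - 2 := by
      rw [hRPdef, LinearMap.finrank_range_of_inj (by exact hφ₀imm x hx)]
      exact finrank_euclideanSpace_fin
    have hmemKorth : ∀ w : EuclideanSpace ℝ (Fin n), ⟪φ₀ x, w⟫ = 0 → ⟪N x, w⟫ = 0 →
        w ∈ Kᗮ := by
      intro w h1 h2
      rw [Submodule.mem_orthogonal]
      intro u hu
      obtain ⟨cφ, cN, rfl⟩ := Submodule.mem_span_pair.mp hu
      simp only [inner_add_left, real_inner_smul_left, h1, h2, mul_zero, add_zero]
    have hRPle : RP ≤ Kᗮ := by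
      rintro w ⟨v, rfl⟩
      exact hmemKorth _ (O1 x hx v) (hNnormal x hx v)
    have hRPeq : RP = Kᗮ :=
      Submodule.eq_of_le_of_finrank_le hRPle (by rw [hKorth, hRPrank])
    have hQmem : ∀ v, fderiv ℝ N x v ∈ RP := by
      intro v
      rw [hRPeq]
      exact hmemKorth _ (O4 x hx v) (O2 x hx v)
    have hPmem : ∀ v, fderiv ℝ φ₀ x v ∈ RP := fun v => ⟨v, rfl⟩
    -- the mixed second partial derivative
    have hGev : (fun q : EuclideanSpace ℝ (Fin (n - 2)) × ℝ => fderiv ℝ f q (e, 0))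
        =ᶠ[nhds (x, s)] (fun q => Real.exp (a q.2) •
          (Real.cos q.2 • fderiv ℝ φ₀ q.1 e + Real.sin q.2 • fderiv ℝ N q.1 e)) := by
      filter_upwards [(hV.prod hJ).mem_nhds ⟨hx, hs⟩] with q hq
      rw [hDfval q.1 hq.1 q.2 hq.2 e 0]
      simp
    have hφ' : DifferentiableAt ℝ (fun x' => fderiv ℝ φ₀ x' e) x :=
      (((hφ₀.fderiv_of_isOpen (m := 1) hV (by exact WithTop.coe_le_coe.mpr le_top)).differentiableOn
        one_ne_zero).differentiableAt (hV.mem_nhds hx)).clm_apply (differentiableAt_const e)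
    have hN' : DifferentiableAt ℝ (fun x' => fderiv ℝ N x' e) x :=
      (((hNsmooth.fderiv_of_isOpen (m := 1) hV (by exact WithTop.coe_le_coe.mpr le_top)).differentiableOn
        one_ne_zero).differentiableAt (hV.mem_nhds hx)).clm_apply (differentiableAt_const e)
    have hc : HasFDerivAt (fun p : EuclideanSpace ℝ (Fin (n - 2)) × ℝ => Real.exp (a p.2))
        ((ContinuousLinearMap.smulRight (1 : ℝ →L[ℝ] ℝ) (Real.exp (a s) * deriv a s)).comp
          (ContinuousLinearMap.snd ℝ (EuclideanSpace ℝ (Fin (n - 2))) ℝ)) (x, s) :=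
      by have h := ((had s hs).exp.hasFDerivAt).comp (x, s)
          (hasFDerivAt_snd (𝕜 := ℝ) (E := EuclideanSpace ℝ (Fin (n - 2))) (F := ℝ) (p := (x, s))); exact h
    have hcos : HasFDerivAt (fun p : EuclideanSpace ℝ (Fin (n - 2)) × ℝ => Real.cos p.2)
        ((ContinuousLinearMap.smulRight (1 : ℝ →L[ℝ] ℝ) (-Real.sin s)).comp
          (ContinuousLinearMap.snd ℝ (EuclideanSpace ℝ (Fin (n - 2))) ℝ)) (x, s) :=
      by have h := ((Real.hasDerivAt_cos s).hasFDerivAt).comp (x, s)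
          (hasFDerivAt_snd (𝕜 := ℝ) (E := EuclideanSpace ℝ (Fin (n - 2))) (F := ℝ) (p := (x, s))); exact h
    have hsin : HasFDerivAt (fun p : EuclideanSpace ℝ (Fin (n - 2)) × ℝ => Real.sin p.2)
        ((ContinuousLinearMap.smulRight (1 : ℝ →L[ℝ] ℝ) (Real.cos s)).comp
          (ContinuousLinearMap.snd ℝ (EuclideanSpace ℝ (Fin (n - 2))) ℝ)) (x, s) :=
      by have h := ((Real.hasDerivAt_sin s).hasFDerivAt).comp (x, s)
          (hasFDerivAt_snd (𝕜 := ℝ) (E := EuclideanSpace ℝ (Fin (n - 2))) (F := ℝ) (p := (x, s))); exact h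
    have hPef : HasFDerivAt (fun q : EuclideanSpace ℝ (Fin (n - 2)) × ℝ =>
        fderiv ℝ φ₀ q.1 e)
        ((fderiv ℝ (fun x' => fderiv ℝ φ₀ x' e) x).comp
          (ContinuousLinearMap.fst ℝ (EuclideanSpace ℝ (Fin (n - 2))) ℝ)) (x, s) :=
      by have h := (hφ'.hasFDerivAt).comp (x, s)
          (hasFDerivAt_fst (𝕜 := ℝ) (E := EuclideanSpace ℝ (Fin (n - 2))) (F := ℝ) (p := (x, s))); exact h
    have hQef : HasFDerivAt (fun q : EuclideanSpace ℝ (Fin (n - 2)) × ℝ =>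
        fderiv ℝ N q.1 e)
        ((fderiv ℝ (fun x' => fderiv ℝ N x' e) x).comp
          (ContinuousLinearMap.fst ℝ (EuclideanSpace ℝ (Fin (n - 2))) ℝ)) (x, s) :=
      by have h := (hN'.hasFDerivAt).comp (x, s)
          (hasFDerivAt_fst (𝕜 := ℝ) (E := EuclideanSpace ℝ (Fin (n - 2))) (F := ℝ) (p := (x, s))); exact h
    have hG := hc.smul ((hcos.smul hPef).add (hsin.smul hQef))
    have hmix : fderiv ℝ (fun q => fderiv ℝ f q (e, 0)) (x, s) (0, 1) =
        (Real.exp (a s) * deriv a s * Real.cos s - Real.exp (a s) * Real.sin s) •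
          fderiv ℝ φ₀ x e +
        (Real.exp (a s) * deriv a s * Real.sin s + Real.exp (a s) * Real.cos s) •
          fderiv ℝ N x e := by
      rw [hGev.fderiv_eq, (show HasFDerivAt (fun q : EuclideanSpace ℝ (Fin (n - 2)) × ℝ =>
        Real.exp (a q.2) • (Real.cos q.2 • fderiv ℝ φ₀ q.1 e + Real.sin q.2 • fderiv ℝ N q.1 e))
        _ (x, s) from hG).fderiv]
      simp only [ContinuousLinearMap.add_apply, ContinuousLinearMap.smul_apply,
        ContinuousLinearMap.comp_apply, ContinuousLinearMap.smulRight_apply,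
        ContinuousLinearMap.coe_fst', ContinuousLinearMap.coe_snd',
        ContinuousLinearMap.one_apply, ContinuousLinearMap.coe_comp', smul_eq_mul,
        map_zero, smul_zero, add_zero, zero_add, mul_one]
      simp only [Pi.add_apply, Pi.smul_apply']
      module
    have hT₀ : fderiv ℝ (fun q => fderiv ℝ f q (e, 0)) (x, s) (0, 1) ∈ RP := by
      rw [hmix]
      exact Submodule.add_mem _ (Submodule.smul_mem _ _ (hPmem e))
        (Submodule.smul_mem _ _ (hQmem e))
    -- the x-part of the range of df equals RP
    set L : EuclideanSpace ℝ (Fin (n - 2)) →ₗ[ℝ] EuclideanSpace ℝ (Fin n) :=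
      ((fderiv ℝ f (x, s)).comp
        (ContinuousLinearMap.inl ℝ (EuclideanSpace ℝ (Fin (n - 2))) ℝ)).toLinearMap
      with hLdef
    have hLval : ∀ v, L v = fderiv ℝ f (x, s) (v, 0) := by
      intro v
      simp [hLdef]
    have hLinj : Function.Injective L := by
      intro v v' h
      rw [hLval, hLval] at h
      have := hinj h
      exact congrArg Prod.fst this
    have hLle : LinearMap.range L ≤ RP := by
      rintro w ⟨v, rfl⟩
      rw [hLval, hDfval x hx s hs v 0]
      simp only [zero_mul, zero_smul, add_zero]
      exact Submodule.smul_mem _ _ (Submodule.add_mem _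
        (Submodule.smul_mem _ _ (hPmem v)) (Submodule.smul_mem _ _ (hQmem v)))
    have hLrank : Module.finrank ℝ (LinearMap.range L) = n - 2 := by
      rw [LinearMap.finrank_range_of_inj hLinj]
      exact finrank_euclideanSpace_fin
    have hLeq : LinearMap.range L = RP :=
      Submodule.eq_of_le_of_finrank_le hLle (by rw [hLrank, hRPrank])
    obtain ⟨v, hv⟩ := (hLeq ▸ hT₀ : _ ∈ LinearMap.range L)
    refine LinearMap.mem_range.mpr ⟨(v, 0), ?_⟩
    rw [← hv, hLval]
    rfl
end
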